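/- arXiv:1910.10278 — 4 statements merged into one kernel-verified Lean document; each statement's English description precedes it below -/
import Mathlib

section
/- Let p be an odd prime, n > 1, q a prime with q ≡ 1 (mod p^{n+1}) and q > p^{n-1}(p-1) + n, h(x) = x^{p^{n-1}(p-1)} − q, and let a_1, …, a_n be integers, each divisible by p, whose residue classes modulo p^2 do not cover all residue classes modulo p^2 that are divisible by p, such that no a_i is divisible by any prime l ≤ p^{n-1}(p-1) + n with l ≠ p, and with a_1 ≠ a_2. Set f(x) = h(x)·∏_{i=1}^n (x − a_i)/p^n. Then for every k ≥ 2, the polynomials g_1 = h(x)(x−a_1)^2 ∏_{i=3}^n (x−a_i)/p^n and g_2 = h(x)(x−a_2)^2 ∏_{i=3}^n (x−a_i)/p^n lie in Int(Z) and are irreducible in Int(Z), f^k = g_1 · g_2 · f^{k−2}, and this factorization of f^k is essentially different from f ⋯ f; hence f is not absolutely irreducible in Int(Z). -/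
open Polynomial

noncomputable section

/-- The ring `Int(ℤ)` of integer-valued polynomials, as a subring of `ℚ[X]`. -/
def IntZ : Subring (Polynomial ℚ) where
  carrier := {f : Polynomial ℚ | ∀ n : ℤ, ∃ m : ℤ, f.eval (n : ℚ) = (m : ℚ)}
  zero_mem' := fun n => ⟨0, by simp⟩
  one_mem' := fun n => ⟨1, by simp⟩
  add_mem' := by
    rintro a b ha hb n
    obtain ⟨m₁, h₁⟩ := ha n
    obtain ⟨m₂, h₂⟩ := hb n
    exact ⟨m₁ + m₂, by simp [h₁, h₂]⟩
  mul_mem' := by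
    rintro a b ha hb n
    obtain ⟨m₁, h₁⟩ := ha n
    obtain ⟨m₂, h₂⟩ := hb n
    exact ⟨m₁ * m₂, by simp [h₁, h₂]⟩
  neg_mem' := by
    rintro a ha n
    obtain ⟨m, h⟩ := ha n
    exact ⟨-m, by simp [h]⟩

/-- Two (multisets of) factorizations are *essentially the same* if they can be matched up
so that corresponding factors are associated. -/
def EssentiallySame {R : Type*} [CommMonoid R] (s t : Multiset R) : Prop :=
  Multiset.Rel Associated s t

/-- An element `r` is *absolutely irreducible* if it is irreducible and for every `n > 1`
every factorization of `r ^ n` into irreducibles is essentially the same as `r ⋯ r`. -/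
def AbsolutelyIrreducible {R : Type*} [CommMonoid R] (r : R) : Prop :=
  Irreducible r ∧
    ∀ n : ℕ, 1 < n → ∀ s : Multiset R, (∀ a ∈ s, Irreducible a) →
      s.prod = r ^ n → EssentiallySame s (Multiset.replicate n r)

/-- The fixed divisor of `g ∈ ℤ[X]`: the ideal of `ℤ` generated by the values of `g`. -/
def fixdiv (g : Polynomial ℤ) : Ideal ℤ :=
  Ideal.span (Set.range fun a : ℤ => g.eval a)

/-- The canonical map `ℤ[X] → ℚ[X]`. -/
def toQ (g : Polynomial ℤ) : Polynomial ℚ :=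
  g.map (Int.castRingHom ℚ)

/-- `h(x) = x^(p^(n-1)(p-1)) − q` over `ℤ`. -/
def hpoly (p n q : ℕ) : Polynomial ℤ :=
  X ^ (p ^ (n - 1) * (p - 1)) - Polynomial.C (q : ℤ)

/-- `f(x) = h(x)·∏_{i=1}^n (x − a_i) / p^n` over `ℚ`
(the `n` integers being `a 0, …, a (n-1)`). -/
def fpoly (p n q : ℕ) (a : ℕ → ℤ) : Polynomial ℚ :=
  Polynomial.C (((p : ℚ) ^ n))⁻¹ *
    toQ (hpoly p n q * ∏ i ∈ Finset.range n, (X - Polynomial.C (a i)))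

/-- `g_j(x) = h(x)·(x − a_j)²·∏_{i=3}^n (x − a_i) / p^n` over `ℚ`, for `j ∈ {0, 1}`
(the doubled root is `a j`, and the remaining factors are `x − a i` for `2 ≤ i < n`). -/
def gpoly (p n q : ℕ) (a : ℕ → ℤ) (j : ℕ) : Polynomial ℚ :=
  Polynomial.C (((p : ℚ) ^ n))⁻¹ *
    toQ (hpoly p n q * (X - Polynomial.C (a j)) ^ 2 *
      ∏ i ∈ Finset.Ico 2 n, (X - Polynomial.C (a i)))

namespace Stmt9Aux


/-- numerator polynomial over a multiset of roots -/
def Np (p n q : ℕ) (t : Multiset ℤ) : Polynomial ℤ :=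
  hpoly p n q * (t.map fun r => (X : Polynomial ℤ) - Polynomial.C r).prod

def Fq (p n q : ℕ) (t : Multiset ℤ) : Polynomial ℚ :=
  Polynomial.C (((p : ℚ) ^ n))⁻¹ * toQ (Np p n q t)

lemma eval_Np (p n q : ℕ) (t : Multiset ℤ) (m : ℤ) :
    (Np p n q t).eval m =
      (m ^ (p ^ (n - 1) * (p - 1)) - (q : ℤ)) * (t.map fun r => m - r).prod := by
  simp [Np, hpoly, eval_multiset_prod, Multiset.map_map, Function.comp]

lemma eval_toQ (g : Polynomial ℤ) (m : ℤ) :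
    (toQ g).eval (m : ℚ) = ((g.eval m : ℤ) : ℚ) := by
  simpa [toQ] using eval_intCast_map (Int.castRingHom ℚ) g m

lemma prod_pow_dvd (p : ℤ) (g : ℤ → ℤ) (t : Multiset ℤ) (h : ∀ r ∈ t, p ∣ g r) :
    p ^ (Multiset.card t) ∣ (t.map g).prod := by
  induction t using Multiset.induction with
  | empty => simp
  | cons a s ih =>
    simp only [Multiset.map_cons, Multiset.prod_cons, Multiset.card_cons, pow_succ]
    exact mul_comm p (p ^ Multiset.card s) ▸
      mul_dvd_mul (h a (Multiset.mem_cons_self a s))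
        (ih fun r hr => h r (Multiset.mem_cons_of_mem hr))

lemma prod_exact (p : ℤ) (hp : Prime p) (g : ℤ → ℤ) (t : Multiset ℤ)
    (h : ∀ r ∈ t, p ∣ g r ∧ ¬ p ^ 2 ∣ g r) :
    ∃ S : ℤ, (t.map g).prod = p ^ (Multiset.card t) * S ∧ ¬ p ∣ S := by
  induction t using Multiset.induction with
  | empty => exact ⟨1, by simp, hp.not_dvd_one⟩
  | cons a s ih =>
    obtain ⟨S, hS, hpS⟩ := ih fun r hr => h r (Multiset.mem_cons_of_mem hr)
    obtain ⟨hd, hnd⟩ := h a (Multiset.mem_cons_self a s)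
    obtain ⟨u, hu⟩ := hd
    have hpu : ¬ p ∣ u := fun ⟨w, hw⟩ => hnd ⟨w, by rw [hu, hw]; ring⟩
    refine ⟨u * S, ?_, fun hd' => ?_⟩
    · simp only [Multiset.map_cons, Multiset.prod_cons, Multiset.card_cons, hS, hu, pow_succ]
      ring
    · rcases hp.dvd_mul.mp hd' with h' | h'
      · exact hpu h'
      · exact hpS h'

/-- Euler's theorem for our setting. -/
lemma euler_dvd {p n q : ℕ} (hp : p.Prime) (hn : 1 < n)
    (hq1 : (q : ℤ) ≡ 1 [ZMOD ((p : ℤ) ^ (n + 1))]) {m : ℤ} (hm : ¬ (p : ℤ) ∣ m) :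
    ((p : ℤ) ^ n) ∣ m ^ (p ^ (n - 1) * (p - 1)) - (q : ℤ) := by
  have hpz : Prime (p : ℤ) := Nat.prime_iff_prime_int.mp hp
  have hcop : IsCoprime (m : ℤ) ((p : ℤ) ^ n) :=
    (IsCoprime.pow_left ((hpz.coprime_iff_not_dvd).mpr hm)).symm
  obtain ⟨u, v, huv⟩ := hcop
  set N := p ^ n with hN
  -- unit in ZMod N
  have hcast : ((p : ZMod N)) ^ n = 0 := by
    rw [← Nat.cast_pow, ← hN, ZMod.natCast_self]
  have hunit : IsUnit ((m : ℤ) : ZMod N) := by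
    apply IsUnit.of_mul_eq_one ((u : ℤ) : ZMod N)
    have := congrArg (fun z : ℤ => (z : ZMod N)) huv
    push_cast at this
    rw [hcast, mul_zero, add_zero] at this
    rw [mul_comm]
    exact this
  have hpow : (((m : ℤ) : ZMod N)) ^ (p ^ (n - 1) * (p - 1)) = 1 := by
    have h1 : (hunit.unit : ZMod N) = ((m : ℤ) : ZMod N) := hunit.unit_spec
    have h2 := ZMod.pow_totient hunit.unit
    have h3 : Nat.totient N = p ^ (n - 1) * (p - 1) :=
      Nat.totient_prime_pow hp (by omega)
    rw [h3] at h2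
    calc (((m : ℤ) : ZMod N)) ^ (p ^ (n - 1) * (p - 1))
        = ((hunit.unit ^ (p ^ (n - 1) * (p - 1)) : (ZMod N)ˣ) : ZMod N) := by
          rw [Units.val_pow_eq_pow_val, h1]
      _ = 1 := by rw [h2]; rfl
  have hq' : ((q : ℤ) : ZMod N) = ((1 : ℤ) : ZMod N) := by
    rw [ZMod.intCast_eq_intCast_iff]
    have hdvd : ((N : ℕ) : ℤ) ∣ ((p : ℤ) ^ (n + 1)) := by
      push_cast [hN]
      exact pow_dvd_pow _ (by omega)
    exact Int.ModEq.of_dvd hdvd hq1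
  have hNc : ((N : ℕ) : ℤ) = (p : ℤ) ^ n := by push_cast [hN]; ring
  rw [← hNc]
  rw [← ZMod.intCast_zmod_eq_zero_iff_dvd]
  push_cast
  rw [hpow]
  push_cast at hq'
  rw [hq']
  ring





lemma cast_prod_sub (x : ℤ) (s : Multiset ℤ) :
    (((s.map fun r => x - r).prod : ℤ) : ℚ) =
      (s.map fun r : ℤ => ((x : ℚ) - (r : ℚ))).prod := by
  have h1 : ((((s.map fun r => x - r)).prod : ℤ) : ℚ) =
      ((s.map fun r => x - r).map fun z : ℤ => ((z : ℚ))).prod :=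
    map_multiset_prod (Int.castRingHom ℚ) _
  rw [h1, Multiset.map_map]
  apply congrArg Multiset.prod
  apply Multiset.map_congr rfl
  intro r _
  simp



end Stmt9Aux
namespace Stmt9Aux

section
variable {p n q : ℕ} {c : ℤ} {t : Multiset ℤ}

lemma e_pos (hp : p.Prime) (hn : 1 < n) : 0 < p ^ (n - 1) * (p - 1) := by
  have := hp.two_le
  have h1 : 0 < p ^ (n - 1) := Nat.pow_pos (by omega)
  have h2 : 0 < p - 1 := by omega
  exact Nat.mul_pos h1 h2

lemma p_le_bound (hp : p.Prime) (hn : 1 < n) : p ≤ p ^ (n - 1) * (p - 1) + n := by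
  have h2 := hp.two_le
  have h1 : p ≤ p ^ (n - 1) := Nat.le_self_pow (by omega) p
  have h3 : 1 ≤ p - 1 := by omega
  calc p ≤ p ^ (n - 1) * (p - 1) := le_trans h1 (Nat.le_mul_of_pos_right _ (by omega))
    _ ≤ p ^ (n - 1) * (p - 1) + n := Nat.le_add_right _ _

lemma Np_dvd (hp : p.Prime) (hn : 1 < n)
    (hq1 : (q:ℤ) ≡ 1 [ZMOD ((p:ℤ)^(n+1))])
    (htcard : Multiset.card t = n) (ht1 : ∀ r ∈ t, (p:ℤ) ∣ r) (m : ℤ) :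
    ((p:ℤ)^n) ∣ (Np p n q t).eval m := by
  rw [eval_Np]
  by_cases hm : (p:ℤ) ∣ m
  · have := prod_pow_dvd (p:ℤ) (fun r => m - r) t (fun r hr => dvd_sub hm (ht1 r hr))
    rw [htcard] at this
    exact Dvd.dvd.mul_left this _
  · exact Dvd.dvd.mul_right (euler_dvd hp hn hq1 hm) _

lemma Fq_mem (hp : p.Prime) (hn : 1 < n)
    (hq1 : (q:ℤ) ≡ 1 [ZMOD ((p:ℤ)^(n+1))])
    (htcard : Multiset.card t = n) (ht1 : ∀ r ∈ t, (p:ℤ) ∣ r) :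
    Fq p n q t ∈ IntZ := by
  intro m
  obtain ⟨k, hk⟩ := Np_dvd hp hn hq1 htcard ht1 m
  refine ⟨k, ?_⟩
  have hp0 : ((p:ℚ))^n ≠ 0 := pow_ne_zero _ (Nat.cast_ne_zero.mpr hp.pos.ne')
  rw [Fq, eval_mul, eval_C, eval_toQ, hk]
  push_cast
  field_simp

lemma p_not_dvd_q (hp : p.Prime) (hn : 1 < n) (hq : q.Prime)
    (hqbig : p ^ (n-1) * (p-1) + n < q) : ¬ (p:ℤ) ∣ (q:ℤ) := by
  intro hd
  have : p ∣ q := Int.ofNat_dvd.mp hd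
  have : p = q := (Nat.prime_dvd_prime_iff_eq hp hq).mp this
  have := p_le_bound hp hn
  omega

lemma Np_eval_c_exact (hp : p.Prime) (hn : 1 < n) (hq : q.Prime)
    (hqbig : p ^ (n-1) * (p-1) + n < q)
    (hc : (p:ℤ) ∣ c) (htcard : Multiset.card t = n)
    (ht1 : ∀ r ∈ t, (p:ℤ) ∣ r)
    (ht2 : ∀ r ∈ t, ¬ (r ≡ c [ZMOD ((p:ℤ)^2)])) :
    ∃ W : ℤ, (Np p n q t).eval c = (p:ℤ)^n * W ∧ ¬ (p:ℤ) ∣ W := by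
  have hpz : Prime (p:ℤ) := Nat.prime_iff_prime_int.mp hp
  obtain ⟨S, hS, hpS⟩ := prod_exact (p:ℤ) hpz (fun r => c - r) t (fun r hr =>
    ⟨dvd_sub hc (ht1 r hr), fun h2 => ht2 r hr ((Int.modEq_iff_dvd).mpr h2)⟩)
  have hepos := e_pos hp hn
  have hcq : ¬ (p:ℤ) ∣ (c ^ (p ^ (n-1) * (p-1)) - (q:ℤ)) := by
    intro hd
    have h1 : (p:ℤ) ∣ c ^ (p ^ (n-1) * (p-1)) := dvd_pow hc hepos.ne'
    have : (p:ℤ) ∣ (q:ℤ) := (dvd_sub_right h1).mp hd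
    exact p_not_dvd_q hp hn hq hqbig this
  refine ⟨(c ^ (p ^ (n-1) * (p-1)) - (q:ℤ)) * S, ?_, ?_⟩
  · rw [eval_Np, hS, htcard]; ring
  · intro hd
    rcases hpz.dvd_mul.mp hd with h | h
    · exact hcq h
    · exact hpS h

lemma exists_not_dvd (hp : p.Prime) (hn : 1 < n) (hq : q.Prime)
    (hqbig : p ^ (n-1) * (p-1) + n < q) (htcard : Multiset.card t = n)
    (ht3 : ∀ r ∈ t, ∀ l : ℕ, l.Prime → l ≤ p ^ (n-1) * (p-1) + n → l ≠ p → ¬ ((l:ℤ) ∣ r))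
    (l : ℕ) (hl : l.Prime) (hlp : l ≠ p) :
    ∃ m : ℤ, ¬ (l:ℤ) ∣ (Np p n q t).eval m := by
  have hepos := e_pos hp hn
  have hlz : Prime (l:ℤ) := Nat.prime_iff_prime_int.mp hl
  rcases le_or_gt l (p ^ (n-1) * (p-1) + n) with hle | hgt
  · refine ⟨0, fun hdvd => ?_⟩
    rw [eval_Np, zero_pow hepos.ne', zero_sub] at hdvd
    rcases hlz.dvd_mul.mp hdvd with h | h
    · have : (l:ℤ) ∣ (q:ℤ) := (dvd_neg).mp h
      have : l ∣ q := Int.ofNat_dvd.mp this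
      have : l = q := (Nat.prime_dvd_prime_iff_eq hl hq).mp this
      omega
    · obtain ⟨x, hx, hdx⟩ := hlz.exists_mem_multiset_dvd h
      obtain ⟨r, hr, rfl⟩ := Multiset.mem_map.mp hx
      have : (l:ℤ) ∣ r := (dvd_sub_left (dvd_zero _)).mp (by simpa using hdx)
      exact ht3 r hr l hl hle hlp this
  · haveI : Fact l.Prime := ⟨hl⟩
    have hmonH : (hpoly p n q).Monic := monic_X_pow_sub_C _ hepos.ne'
    have hmonP : ((t.map fun r => (X : Polynomial ℤ) - Polynomial.C r).prod).Monic :=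
      monic_multiset_prod_of_monic t _ (fun r _ => monic_X_sub_C r)
    have hmonN : (Np p n q t).Monic := hmonH.mul hmonP
    have hdegN : (Np p n q t).natDegree = p ^ (n-1) * (p-1) + n := by
      rw [Np, hmonH.natDegree_mul hmonP, hpoly, natDegree_X_pow_sub_C,
        natDegree_multiset_prod_X_sub_C_eq_card, htcard]
    set M := (Np p n q t).map (Int.castRingHom (ZMod l)) with hM
    have hmonM : M.Monic := hmonN.map _
    have hM0 : M ≠ 0 := hmonM.ne_zero
    have hdegM : M.natDegree = p ^ (n-1) * (p-1) + n := by
      rw [hM, hmonN.natDegree_map, hdegN]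
    obtain ⟨x, hx⟩ := M.exists_eval_ne_zero_of_natDegree_lt_card hM0 (by
      rw [Cardinal.mk_fintype, ZMod.card, hdegM]
      exact_mod_cast hgt)
    obtain ⟨m, rfl⟩ := ZMod.intCast_surjective x
    refine ⟨m, fun hdvd => hx ?_⟩
    have h0 : (((Np p n q t).eval m : ℤ) : ZMod l) = 0 :=
      (ZMod.intCast_zmod_eq_zero_iff_dvd _ l).mpr hdvd
    rw [hM, eval_intCast_map]
    exact h0

end

end Stmt9Aux
namespace Stmt9Aux

section
variable {p n q : ℕ}

lemma hpoly_irreducible_int (hq : q.Prime) (he : p ^ (n-1) * (p-1) ≠ 0) :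
    Irreducible (hpoly p n q) := by
  have hqz : Prime (q:ℤ) := Nat.prime_iff_prime_int.mp hq
  have hq0 : (q:ℤ) ≠ 0 := by exact_mod_cast hq.pos.ne'
  have hmon : (hpoly p n q).Monic := monic_X_pow_sub_C _ he
  have hdeg : (hpoly p n q).degree = (p ^ (n-1) * (p-1) : ℕ) := by
    rw [hpoly]; exact degree_X_pow_sub_C (Nat.pos_of_ne_zero he) _
  apply irreducible_of_eisenstein_criterion
    (P := Ideal.span {(q:ℤ)}) ((Ideal.span_singleton_prime hq0).mpr hqz)
  · rw [hmon.leadingCoeff, Ideal.mem_span_singleton]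
    exact fun h => hqz.not_unit (isUnit_of_dvd_one h)
  · intro k hk
    rw [hdeg] at hk
    have hk' : k ≠ p ^ (n-1) * (p-1) := by
      intro h; rw [h] at hk; exact lt_irrefl _ (by exact_mod_cast hk)
    rw [hpoly, coeff_sub, coeff_X_pow, if_neg hk', coeff_C, Ideal.mem_span_singleton]
    split <;> simp
  · rw [hdeg]
    exact_mod_cast Nat.pos_of_ne_zero he
  · rw [hpoly, coeff_sub, coeff_X_pow, if_neg (Ne.symm (Nat.pos_of_ne_zero he).ne'),
      coeff_C, if_pos rfl, Ideal.span_singleton_pow, Ideal.mem_span_singleton]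
    intro hd
    have hd' : (q:ℤ)^2 ∣ (q:ℤ) := by
      have : (q:ℤ)^2 ∣ -(q:ℤ) := by simpa using hd
      exact (dvd_neg).mp this
    have h1 : (q:ℤ) > 0 := by exact_mod_cast hq.pos
    have h2 := Int.le_of_dvd h1 hd'
    nlinarith [hq.two_le, (by exact_mod_cast hq.two_le : (2:ℤ) ≤ (q:ℤ))]
  · exact hmon.isPrimitive

lemma hQ_irreducible (hq : q.Prime) (he : p ^ (n-1) * (p-1) ≠ 0) :
    Irreducible (toQ (hpoly p n q)) := by
  have hmon : (hpoly p n q).Monic := monic_X_pow_sub_C _ he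
  exact (IsPrimitive.Int.irreducible_iff_irreducible_map_cast hmon.isPrimitive).mp
    (hpoly_irreducible_int hq he)

end

end Stmt9Aux
namespace Stmt9Aux

section
variable {p n q : ℕ} {c : ℤ} {t : Multiset ℤ}

lemma toQ_prod_linear (t : Multiset ℤ) :
    toQ ((t.map fun r => (X : Polynomial ℤ) - Polynomial.C r).prod) =
      ((t.map fun r : ℤ => ((r : ℚ))).map fun a => (X : Polynomial ℚ) - Polynomial.C a).prod := by
  rw [toQ, Polynomial.map_multiset_prod, Multiset.map_map, Multiset.map_map]
  apply congrArg Multiset.prod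
  apply Multiset.map_congr rfl
  intro r _
  simp

lemma Fq_eq (p n q : ℕ) (t : Multiset ℤ) :
    Fq p n q t = Polynomial.C (((p:ℚ))^n)⁻¹ * (toQ (hpoly p n q) *
      ((t.map fun r : ℤ => ((r : ℚ))).map fun a => (X : Polynomial ℚ) - Polynomial.C a).prod) := by
  rw [Fq, Np, toQ, Polynomial.map_mul, ← toQ, ← toQ, toQ_prod_linear]

/-- The heart: in any factorization of `Fq`, the factor not divisible by `h` is `±1`. -/
lemma factor_unit (hp : p.Prime) (hn : 1 < n) (hq : q.Prime)
    (hq1 : (q:ℤ) ≡ 1 [ZMOD ((p:ℤ)^(n+1))])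
    (hqbig : p ^ (n-1) * (p-1) + n < q)
    (hc : (p:ℤ) ∣ c) (htcard : Multiset.card t = n)
    (ht1 : ∀ r ∈ t, (p:ℤ) ∣ r)
    (ht2 : ∀ r ∈ t, ¬ (r ≡ c [ZMOD ((p:ℤ)^2)]))
    (ht3 : ∀ r ∈ t, ∀ l : ℕ, l.Prime → l ≤ p ^ (n-1) * (p-1) + n → l ≠ p → ¬ ((l:ℤ) ∣ r))
    {u v : Polynomial ℚ} (hu : u ∈ IntZ) (hv : v ∈ IntZ)
    (huv : Fq p n q t = u * v) (hHv : ¬ (toQ (hpoly p n q) ∣ v)) :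
    v = 1 ∨ v = -1 := by
  have hpz : Prime (p:ℤ) := Nat.prime_iff_prime_int.mp hp
  have hppos : (0:ℚ) < (p:ℚ) := by exact_mod_cast hp.pos
  have hpn0 : ((p:ℚ))^n ≠ 0 := pow_ne_zero _ hppos.ne'
  set tQ : Multiset ℚ := t.map (fun r : ℤ => ((r : ℚ))) with htQ
  set P : Polynomial ℚ := (tQ.map fun a => (X : Polynomial ℚ) - Polynomial.C a).prod with hP
  set HQ : Polynomial ℚ := toQ (hpoly p n q) with hHQ
  have hPmon : P.Monic := monic_multiset_prod_of_monic _ _ (fun a _ => monic_X_sub_C a)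
  have hP0 : P ≠ 0 := hPmon.ne_zero
  -- v divides HQ * P
  have hvP : v ∣ P := by
    have h1 : v ∣ HQ * P := by
      refine ⟨Polynomial.C (((p:ℚ))^n) * u, ?_⟩
      have h2 : Polynomial.C (((p:ℚ))^n) * Fq p n q t = HQ * P := by
        rw [Fq_eq, ← mul_assoc, ← Polynomial.C_mul, mul_inv_cancel₀ hpn0,
          Polynomial.C_1, one_mul, hHQ, hP, htQ]
      rw [huv] at h2
      rw [← h2]; ring
    have hcop : IsCoprime HQ v :=
      ((hQ_irreducible hq (e_pos hp hn).ne').coprime_iff_not_dvd).mpr hHv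
    exact hcop.symm.dvd_of_dvd_mul_left h1
  have hv0 : v ≠ 0 := by
    intro h0; rw [h0] at hvP; exact hP0 (zero_dvd_iff.mp hvP)
  -- v is a scalar times a product of integer linear factors
  have hProots : P.roots = tQ := roots_multiset_prod_X_sub_C tQ
  have hvroots : v.roots ≤ tQ := hProots ▸ roots.le_of_dvd hP0 hvP
  have hPsplits : Splits P := by
    rw [splits_iff_card_roots, hProots, natDegree_multiset_prod_X_sub_C_eq_card]
  have hvsplits : Splits v := Splits.of_dvd hPsplits hP0 hvP
  have hveq := hvsplits.eq_prod_roots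
  set s : Multiset ℤ := v.roots.map (fun x => ⌊x⌋) with hs
  have hsmap : s.map (fun r : ℤ => ((r:ℚ))) = v.roots := by
    rw [hs, Multiset.map_map]
    conv_rhs => rw [show v.roots = v.roots.map id from (Multiset.map_id _).symm]
    apply Multiset.map_congr rfl
    intro x hx
    obtain ⟨r, _, rfl⟩ := Multiset.mem_map.mp (Multiset.mem_of_le hvroots hx)
    simp
  have hst : s ≤ t := by
    have hinj : Function.Injective (fun r : ℤ => ((r:ℚ))) := fun a b hab => by simpa using hab
    rw [← Multiset.map_le_map_iff hinj (s := s) (t := t), hsmap]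
    exact hvroots
  set γ : ℚ := v.leadingCoeff with hγ
  have hveval : ∀ x : ℚ, v.eval x = γ * ((s.map fun r : ℤ => x - ((r:ℚ))).prod) := by
    intro x
    conv_lhs => rw [hveq]
    rw [eval_mul, eval_C, eval_multiset_prod, ← hsmap, Multiset.map_map, Multiset.map_map]
    simp [Function.comp]
  -- integer values
  obtain ⟨A, hA⟩ := hv (c : ℤ)
  obtain ⟨B, hB⟩ := hv (1 : ℤ)
  obtain ⟨U, hU⟩ := hu (c : ℤ)
  obtain ⟨W, hW, hpW⟩ := Np_eval_c_exact hp hn hq hqbig hc htcard ht1 ht2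
  -- p does not divide A
  have hFc : (Fq p n q t).eval ((c:ℤ) : ℚ) = (W : ℚ) := by
    rw [Fq, eval_mul, eval_C, eval_toQ, hW]
    push_cast
    field_simp
  have hUAW : U * A = W := by
    have h3 : ((U * A : ℤ) : ℚ) = ((W:ℤ) : ℚ) := by
      push_cast
      rw [← hA, ← hU, ← hFc, huv, eval_mul]
    exact_mod_cast h3
  have hpA : ¬ (p:ℤ) ∣ A := fun hd => hpW (hUAW ▸ Dvd.dvd.mul_left hd U)
  -- the integer products
  set πc : ℤ := (s.map fun r => c - r).prod with hπc
  set π1 : ℤ := (s.map fun r => 1 - r).prod with hπ1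
  have hAc : (A : ℚ) = γ * ((πc : ℤ) : ℚ) := by
    rw [← hA]
    have h4 := hveval ((c:ℤ):ℚ)
    rw [h4, hπc, cast_prod_sub]
  have hB1 : (B : ℚ) = γ * ((π1 : ℤ) : ℚ) := by
    rw [← hB]
    have h4 := hveval ((1:ℤ):ℚ)
    rw [h4, hπ1, cast_prod_sub]
  have hkey : A * π1 = B * πc := by
    have h5 : ((A * π1 : ℤ) : ℚ) = ((B * πc : ℤ) : ℚ) := by
      push_cast
      rw [hAc, hB1]
      ring
    exact_mod_cast h5
  -- p-valuation of πc is exactly card s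
  obtain ⟨S, hSS, hpS⟩ := prod_exact (p:ℤ) hpz (fun r => c - r) s (fun r hr =>
    ⟨dvd_sub hc (ht1 r (Multiset.mem_of_le hst hr)),
     fun h2 => ht2 r (Multiset.mem_of_le hst hr) ((Int.modEq_iff_dvd).mpr h2)⟩)
  have hpπ1 : ¬ (p:ℤ) ∣ π1 := by
    intro hd
    rw [hπ1] at hd
    obtain ⟨x, hx, hdx⟩ := hpz.exists_mem_multiset_dvd hd
    obtain ⟨r, hr, rfl⟩ := Multiset.mem_map.mp hx
    have hpr := ht1 r (Multiset.mem_of_le hst hr)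
    have h6 : (p:ℤ) ∣ 1 := by
      have := dvd_sub hdx (dvd_neg.mpr hpr)
      simpa using this
    exact hpz.not_dvd_one h6
  -- conclude s = 0
  have hs0 : s = 0 := by
    by_contra hne
    have hcard : 0 < Multiset.card s := Multiset.card_pos.mpr hne
    have hpdvd : (p:ℤ) ∣ A * π1 := by
      rw [hkey, show πc = (p:ℤ)^(Multiset.card s) * S from hπc.trans hSS]
      exact Dvd.dvd.mul_left (Dvd.dvd.mul_right (dvd_pow_self _ hcard.ne') S) B
    rcases hpz.dvd_mul.mp hpdvd with h | h
    · exact hpA h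
    · exact hpπ1 h
  -- v is the constant B, and B = ±1
  have hπ1_1 : π1 = 1 := by rw [hπ1, hs0]; simp
  have hγB : γ = (B:ℚ) := by rw [hB1, hπ1_1]; simp
  have hvC : v = Polynomial.C ((B : ℚ)) := by
    rw [hveq, ← hsmap, hs0]
    simp [hγB]
  have hB0 : B ≠ 0 := by
    intro h0
    apply hv0
    rw [hvC, h0]
    simp
  have hAB : A = B := by
    have hπc_1 : πc = 1 := by rw [hπc, hs0]; simp
    have h7 : (A:ℚ) = (B:ℚ) := by rw [hAc, hB1, hπc_1, hπ1_1]
    exact_mod_cast h7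
  have hBunit : IsUnit B := by
    by_contra hnu
    have hnat1 : B.natAbs ≠ 1 := fun h => hnu (Int.isUnit_iff_natAbs_eq.mpr h)
    obtain ⟨l, hl, hld⟩ := Nat.exists_prime_and_dvd hnat1
    have hlB : (l:ℤ) ∣ B := Int.dvd_natAbs.mp (Int.ofNat_dvd.mpr hld)
    by_cases hlp : l = p
    · subst hlp
      exact hpA (hAB ▸ hlB)
    · obtain ⟨m, hm⟩ := exists_not_dvd hp hn hq hqbig htcard ht3 l hl hlp
      obtain ⟨U', hU'⟩ := hu m
      apply hm
      have hvB : v.eval ((m:ℤ):ℚ) = ((B:ℤ):ℚ) := by rw [hvC]; simp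
      have hev : ((p:ℤ))^n * (U' * B) = (Np p n q t).eval m := by
        have h8 : (((p:ℤ)^n * (U' * B) : ℤ) : ℚ) = (((Np p n q t).eval m : ℤ) : ℚ) := by
          have h9 : (Fq p n q t).eval ((m:ℤ):ℚ) = u.eval ((m:ℤ):ℚ) * v.eval ((m:ℤ):ℚ) := by
            rw [huv, eval_mul]
          rw [Fq, eval_mul, eval_C, eval_toQ] at h9
          push_cast
          rw [← hU']
          push_cast at hvB
          rw [← hvB, ← h9]
          field_simp
        exact_mod_cast h8
      rw [← hev]
      exact Dvd.dvd.mul_left (Dvd.dvd.mul_left hlB U') _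
  rcases Int.isUnit_iff.mp hBunit with h1 | h1 <;> rw [h1] at hvC
  · left; simpa using hvC
  · right; rw [hvC]; push_cast; simp

end

end Stmt9Aux
namespace Stmt9Aux

section
variable {p n q : ℕ} {c : ℤ} {t : Multiset ℤ}

lemma IntZ_coe_mul (a b : IntZ) : ((a * b : IntZ) : Polynomial ℚ) = (a : Polynomial ℚ) * b := rfl

lemma IntZ_unit_poly {w : IntZ} (h : IsUnit w) :
    (w : Polynomial ℚ) = 1 ∨ (w : Polynomial ℚ) = -1 := by
  obtain ⟨w', hw'⟩ := h.exists_right_inv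
  have hpoly : (w : Polynomial ℚ) * (w' : Polynomial ℚ) = 1 := by
    rw [← IntZ_coe_mul, hw']; rfl
  have hu : IsUnit (w : Polynomial ℚ) := IsUnit.of_mul_eq_one _ hpoly
  obtain ⟨γ, hγu, hγ⟩ := Polynomial.isUnit_iff.mp hu
  obtain ⟨A, hA⟩ := w.2 0
  have hγA : γ = (A : ℚ) := by
    have := hA
    rw [← hγ] at this
    simpa using this
  obtain ⟨A', hA'⟩ := w'.2 0
  have hAA' : (A : ℚ) * (A' : ℚ) = 1 := by
    have := congrArg (fun z : Polynomial ℚ => z.eval ((0:ℤ):ℚ)) hpoly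
    simp only [eval_mul, eval_one] at this
    rw [hA, hA'] at this
    exact this
  have hAunit : A = 1 ∨ A = -1 := by
    apply Int.isUnit_iff.mp
    refine IsUnit.of_mul_eq_one A' ?_
    exact_mod_cast hAA'
  rcases hAunit with h1 | h1
  · left; rw [← hγ, hγA, h1]; simp
  · right; rw [← hγ, hγA, h1]; simp

lemma Fq_natDegree (hq0 : (p:ℚ) ≠ 0) (he : p ^ (n-1) * (p-1) ≠ 0) (htcard : Multiset.card t = n) :
    (Fq p n q t).natDegree = p ^ (n-1) * (p-1) + n ∧ Fq p n q t ≠ 0 := by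
  have hmonH : (hpoly p n q).Monic := monic_X_pow_sub_C _ he
  have hmonP : ((t.map fun r => (X : Polynomial ℤ) - Polynomial.C r).prod).Monic :=
    monic_multiset_prod_of_monic t _ (fun r _ => monic_X_sub_C r)
  have hmonN : (Np p n q t).Monic := hmonH.mul hmonP
  have hdegN : (Np p n q t).natDegree = p ^ (n-1) * (p-1) + n := by
    rw [Np, hmonH.natDegree_mul hmonP, hpoly, natDegree_X_pow_sub_C,
      natDegree_multiset_prod_X_sub_C_eq_card, htcard]
  have hmonNQ : (toQ (Np p n q t)).Monic := hmonN.map _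
  have hinv : (((p:ℚ))^n)⁻¹ ≠ 0 := inv_ne_zero (pow_ne_zero _ hq0)
  have hC0 : (Polynomial.C (((p:ℚ))^n)⁻¹) ≠ 0 := by
    rw [ne_eq, Polynomial.C_eq_zero]; exact hinv
  constructor
  · rw [Fq, toQ, natDegree_C_mul hinv, hmonN.natDegree_map, hdegN]
  · rw [Fq, toQ]
    exact mul_ne_zero hC0 (hmonN.map (Int.castRingHom ℚ)).ne_zero

lemma Fq_not_unit (hp : p.Prime) (hn : 1 < n) (htcard : Multiset.card t = n)
    (hF : Fq p n q t ∈ IntZ) :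
    ¬ IsUnit (⟨Fq p n q t, hF⟩ : IntZ) := by
  intro h
  obtain ⟨w', hw'⟩ := h.exists_right_inv
  have hpoly : (Fq p n q t) * (w' : Polynomial ℚ) = 1 := by
    have := congrArg (fun z : IntZ => (z : Polynomial ℚ)) hw'
    simpa using this
  have hu : IsUnit (Fq p n q t) := IsUnit.of_mul_eq_one _ hpoly
  have h0 := natDegree_eq_zero_of_isUnit hu
  have hq0 : (p:ℚ) ≠ 0 := by exact_mod_cast hp.pos.ne'
  obtain ⟨hdeg, -⟩ := Fq_natDegree (q := q) hq0 (e_pos hp hn).ne' htcard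
  rw [hdeg] at h0
  have := e_pos hp hn
  omega

lemma unit_of_eq_pm_one {w : Polynomial ℚ} (hw : w ∈ IntZ) (h : w = 1 ∨ w = -1) :
    IsUnit (⟨w, hw⟩ : IntZ) := by
  rcases h with h | h
  · have : (⟨w, hw⟩ : IntZ) = 1 := Subtype.ext (by simpa using h)
    rw [this]; exact isUnit_one
  · have : (⟨w, hw⟩ : IntZ) = -1 := Subtype.ext (by simpa using h)
    rw [this]; exact isUnit_one.neg

lemma HQ_not_dvd_both (hp : p.Prime) (hp2 : p ≠ 2) (hn : 1 < n) (hq : q.Prime)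
    (htcard : Multiset.card t = n) {a b : Polynomial ℚ}
    (hab : Fq p n q t = a * b) (hda : toQ (hpoly p n q) ∣ a) :
    ¬ toQ (hpoly p n q) ∣ b := by
  intro hdb
  have he := e_pos hp hn
  have hegt1 : 1 < p ^ (n-1) * (p-1) := by
    have h2 := hp.two_le
    have hp3 : 3 ≤ p := by
      rcases Nat.lt_or_ge p 3 with h | h
      · interval_cases p <;> simp_all
      · exact h
    have h1 : p ≤ p ^ (n - 1) := Nat.le_self_pow (by omega) p
    have h3 : 2 ≤ p - 1 := by omega
    calc 1 < 3 * 2 := by norm_num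
      _ ≤ p ^ (n-1) * (p-1) := Nat.mul_le_mul (le_trans hp3 h1) h3
  set HQ := toQ (hpoly p n q) with hHQ
  have hmonH : (hpoly p n q).Monic := monic_X_pow_sub_C _ he.ne'
  have hmonHQ : HQ.Monic := hmonH.map _
  have hHQdeg : HQ.natDegree = p ^ (n-1) * (p-1) := by
    rw [hHQ, toQ, hmonH.natDegree_map, hpoly, natDegree_X_pow_sub_C]
  have hHQprime : Prime HQ := (hQ_irreducible hq he.ne').prime
  set P : Polynomial ℚ :=
    ((t.map fun r : ℤ => ((r : ℚ))).map fun x => (X : Polynomial ℚ) - Polynomial.C x).prod with hP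
  have hsq : HQ * HQ ∣ Fq p n q t := by rw [hab]; exact mul_dvd_mul hda hdb
  have hpn0 : ((p:ℚ))^n ≠ 0 := by
    apply pow_ne_zero
    exact_mod_cast hp.pos.ne'
  have hCF : Polynomial.C (((p:ℚ))^n) * Fq p n q t = HQ * P := by
    rw [Fq_eq, ← mul_assoc, ← Polynomial.C_mul, mul_inv_cancel₀ hpn0,
      Polynomial.C_1, one_mul, hHQ, hP]
  have h1 : HQ * HQ ∣ HQ * P := by
    rw [← hCF]
    exact Dvd.dvd.mul_left hsq _
  have h2 : HQ ∣ P := (mul_dvd_mul_iff_left (a := HQ) hmonHQ.ne_zero).mp h1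
  obtain ⟨x, hx, hdx⟩ := hHQprime.exists_mem_multiset_dvd h2
  obtain ⟨rq, hrq, rfl⟩ := Multiset.mem_map.mp hx
  have hle := natDegree_le_of_dvd hdx (X_sub_C_ne_zero rq)
  rw [hHQdeg, natDegree_X_sub_C] at hle
  omega

end

end Stmt9Aux
namespace Stmt9Aux

section
variable {p n q : ℕ} {c : ℤ} {t : Multiset ℤ}

lemma Fq_irreducible (hp : p.Prime) (hp2 : p ≠ 2) (hn : 1 < n) (hq : q.Prime)
    (hq1 : (q:ℤ) ≡ 1 [ZMOD ((p:ℤ)^(n+1))])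
    (hqbig : p ^ (n-1) * (p-1) + n < q)
    (hc : (p:ℤ) ∣ c) (htcard : Multiset.card t = n)
    (ht1 : ∀ r ∈ t, (p:ℤ) ∣ r)
    (ht2 : ∀ r ∈ t, ¬ (r ≡ c [ZMOD ((p:ℤ)^2)]))
    (ht3 : ∀ r ∈ t, ∀ l : ℕ, l.Prime → l ≤ p ^ (n-1) * (p-1) + n → l ≠ p → ¬ ((l:ℤ) ∣ r))
    (hF : Fq p n q t ∈ IntZ) :
    Irreducible (⟨Fq p n q t, hF⟩ : IntZ) := by
  constructor
  · exact Fq_not_unit hp hn htcard hF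
  · intro a b hab
    have habQ : Fq p n q t = (a : Polynomial ℚ) * (b : Polynomial ℚ) :=
      congrArg Subtype.val hab
    have he := e_pos hp hn
    have hHdvd : toQ (hpoly p n q) ∣ Fq p n q t := by
      refine ⟨Polynomial.C (((p:ℚ))^n)⁻¹ *
        ((t.map fun r : ℤ => ((r : ℚ))).map fun x => (X : Polynomial ℚ) - Polynomial.C x).prod, ?_⟩
      rw [Fq_eq]; ring
    have hHprime := (hQ_irreducible hq he.ne').prime
    rcases hHprime.dvd_mul.mp (habQ ▸ hHdvd) with hda | hdb
    · right
      have hnb := HQ_not_dvd_both hp hp2 hn hq htcard habQ hda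
      exact unit_of_eq_pm_one b.2
        (factor_unit hp hn hq hq1 hqbig hc htcard ht1 ht2 ht3 a.2 b.2 habQ hnb)
    · left
      have habQ' : Fq p n q t = (b : Polynomial ℚ) * (a : Polynomial ℚ) := by
        rw [habQ]; ring
      have hna := HQ_not_dvd_both hp hp2 hn hq htcard habQ' hdb
      exact unit_of_eq_pm_one a.2
        (factor_unit hp hn hq hq1 hqbig hc htcard ht1 ht2 ht3 b.2 a.2 habQ' hna)

end

/-- multiset for `fpoly` -/
def tf (a : ℕ → ℤ) (n : ℕ) : Multiset ℤ := (Multiset.range n).map a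

/-- multiset for `gpoly j` -/
def tg (a : ℕ → ℤ) (n j : ℕ) : Multiset ℤ :=
  a j ::ₘ a j ::ₘ (Finset.Ico 2 n).val.map a

lemma tf_card (a : ℕ → ℤ) (n : ℕ) : Multiset.card (tf a n) = n := by simp [tf]

lemma tg_card (a : ℕ → ℤ) {n : ℕ} (hn : 1 < n) (j : ℕ) :
    Multiset.card (tg a n j) = n := by
  simp [tg]
  omega

lemma tf_mem {a : ℕ → ℤ} {n : ℕ} {r : ℤ} (hr : r ∈ tf a n) : ∃ i < n, r = a i := by
  obtain ⟨i, hi, rfl⟩ := Multiset.mem_map.mp hr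
  exact ⟨i, Multiset.mem_range.mp hi, rfl⟩

lemma tg_mem {a : ℕ → ℤ} {n j : ℕ} (hj : j < n) {r : ℤ} (hr : r ∈ tg a n j) :
    ∃ i < n, r = a i := by
  rcases Multiset.mem_cons.mp hr with h | hr'
  · exact ⟨j, hj, h⟩
  rcases Multiset.mem_cons.mp hr' with h | hr''
  · exact ⟨j, hj, h⟩
  obtain ⟨i, hi, rfl⟩ := Multiset.mem_map.mp hr''
  have := Finset.mem_Ico.mp (Finset.mem_val.mp hi)
  exact ⟨i, this.2, rfl⟩

lemma fpoly_eq (p n q : ℕ) (a : ℕ → ℤ) : fpoly p n q a = Fq p n q (tf a n) := by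
  rw [fpoly, Fq, Np]
  congr 2
  rw [Finset.prod_eq_multiset_prod, tf, Multiset.map_map, Finset.range_val]
  rfl

lemma gpoly_eq (p n q : ℕ) (a : ℕ → ℤ) (j : ℕ) :
    gpoly p n q a j = Fq p n q (tg a n j) := by
  have hZ : hpoly p n q * ((X : Polynomial ℤ) - Polynomial.C (a j)) ^ 2 *
      ∏ i ∈ Finset.Ico 2 n, ((X : Polynomial ℤ) - Polynomial.C (a i)) =
      hpoly p n q * ((tg a n j).map fun r => (X : Polynomial ℤ) - Polynomial.C r).prod := by
    rw [tg]
    simp only [Multiset.map_cons, Multiset.prod_cons, Finset.prod_eq_multiset_prod,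
      Multiset.map_map, Function.comp]
    ring
  rw [gpoly, Fq, Np, ← hZ]

lemma prod_split {n : ℕ} (hn : 1 < n) (a : ℕ → ℤ) :
    (∏ i ∈ Finset.range n, ((X : Polynomial ℤ) - Polynomial.C (a i))) =
      ((X : Polynomial ℤ) - Polynomial.C (a 0)) * ((X : Polynomial ℤ) - Polynomial.C (a 1)) *
        ∏ i ∈ Finset.Ico 2 n, ((X : Polynomial ℤ) - Polynomial.C (a i)) := by
  rw [Finset.range_eq_Ico,
    ← Finset.prod_Ico_consecutive (fun i => (X : Polynomial ℤ) - Polynomial.C (a i))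
      (Nat.zero_le 2) hn]
  congr 1
  rw [← Finset.range_eq_Ico]
  rw [Finset.prod_range_succ, Finset.prod_range_one]

lemma fsq (p : ℕ) {n : ℕ} (q : ℕ) (hn : 1 < n) (a : ℕ → ℤ) :
    (fpoly p n q a) ^ 2 = gpoly p n q a 0 * gpoly p n q a 1 := by
  have hZ : (hpoly p n q * ∏ i ∈ Finset.range n, ((X : Polynomial ℤ) - Polynomial.C (a i))) ^ 2 =
      (hpoly p n q * ((X : Polynomial ℤ) - Polynomial.C (a 0)) ^ 2 *
        ∏ i ∈ Finset.Ico 2 n, ((X : Polynomial ℤ) - Polynomial.C (a i))) *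
      (hpoly p n q * ((X : Polynomial ℤ) - Polynomial.C (a 1)) ^ 2 *
        ∏ i ∈ Finset.Ico 2 n, ((X : Polynomial ℤ) - Polynomial.C (a i))) := by
    rw [prod_split hn a]
    ring
  rw [fpoly, gpoly, gpoly, mul_pow, ← Polynomial.C_pow, ]
  rw [toQ, toQ, toQ, ← Polynomial.map_pow, hZ, Polynomial.map_mul]
  rw [Polynomial.C_pow]
  ring

end Stmt9Aux
namespace Stmt9Aux

lemma g_ne {p n q : ℕ} {a : ℕ → ℤ} (hp : p.Prime) (hn : 1 < n) (hq : q.Prime)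
    (hne : a 0 ≠ a 1) {j : ℕ} (hj : j = 0 ∨ j = 1) :
    gpoly p n q a j ≠ fpoly p n q a ∧ gpoly p n q a j ≠ -fpoly p n q a := by
  have he := e_pos hp hn
  have hq0 : (p:ℚ) ≠ 0 := by exact_mod_cast hp.pos.ne'
  have hC0 : (Polynomial.C (((p:ℚ))^n)⁻¹) ≠ 0 := by
    rw [ne_eq, Polynomial.C_eq_zero]
    exact inv_ne_zero (pow_ne_zero _ hq0)
  have toQinj : Function.Injective toQ :=
    Polynomial.map_injective (Int.castRingHom ℚ) Int.cast_injective
  have hmonH : (hpoly p n q).Monic := monic_X_pow_sub_C _ he.ne'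
  have hmonIco : (∏ i ∈ Finset.Ico 2 n, ((X : Polynomial ℤ) - Polynomial.C (a i))).Monic :=
    monic_prod_of_monic _ _ (fun i _ => monic_X_sub_C (a i))
  have hmonNf : (hpoly p n q * ∏ i ∈ Finset.range n,
      ((X : Polynomial ℤ) - Polynomial.C (a i))).Monic :=
    hmonH.mul (monic_prod_of_monic _ _ (fun i _ => monic_X_sub_C (a i)))
  have hmonNg : (hpoly p n q * ((X : Polynomial ℤ) - Polynomial.C (a j)) ^ 2 *
      ∏ i ∈ Finset.Ico 2 n, ((X : Polynomial ℤ) - Polynomial.C (a i))).Monic :=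
    ((hmonH.mul ((monic_X_sub_C (a j)).pow 2)).mul hmonIco)
  constructor
  · intro heq
    rw [gpoly, fpoly] at heq
    have h1 := mul_left_cancel₀ hC0 heq
    have h2 := toQinj h1
    have h3 : hpoly p n q * (((X : Polynomial ℤ) - Polynomial.C (a j)) ^ 2 *
        ∏ i ∈ Finset.Ico 2 n, ((X : Polynomial ℤ) - Polynomial.C (a i))) =
        hpoly p n q * (((X : Polynomial ℤ) - Polynomial.C (a 0)) *
          ((X : Polynomial ℤ) - Polynomial.C (a 1)) *
          ∏ i ∈ Finset.Ico 2 n, ((X : Polynomial ℤ) - Polynomial.C (a i))) := by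
      rw [← mul_assoc, h2, prod_split hn a]
      try ring
    have h4 := mul_left_cancel₀ hmonH.ne_zero h3
    have h5 : ((X : Polynomial ℤ) - Polynomial.C (a j)) ^ 2 =
        ((X : Polynomial ℤ) - Polynomial.C (a 0)) *
          ((X : Polynomial ℤ) - Polynomial.C (a 1)) := by
      exact mul_right_cancel₀ hmonIco.ne_zero h4
    rcases hj with rfl | rfl
    · have h6 := congrArg (Polynomial.eval (a 1)) h5
      simp only [eval_pow, eval_mul, eval_sub, eval_X, eval_C] at h6
      have : (a 1 - a 0) ^ 2 = 0 := by rw [h6]; ring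
      have := sub_eq_zero.mp (pow_eq_zero_iff (n := 2) (by norm_num) |>.mp this)
      exact hne this.symm
    · have h6 := congrArg (Polynomial.eval (a 0)) h5
      simp only [eval_pow, eval_mul, eval_sub, eval_X, eval_C] at h6
      have : (a 0 - a 1) ^ 2 = 0 := by rw [h6]; ring
      have := sub_eq_zero.mp (pow_eq_zero_iff (n := 2) (by norm_num) |>.mp this)
      exact hne this
  · intro heq
    rw [gpoly, fpoly] at heq
    have h1 : toQ (hpoly p n q * ((X : Polynomial ℤ) - Polynomial.C (a j)) ^ 2 *
        ∏ i ∈ Finset.Ico 2 n, ((X : Polynomial ℤ) - Polynomial.C (a i))) =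
        - toQ (hpoly p n q * ∏ i ∈ Finset.range n,
          ((X : Polynomial ℤ) - Polynomial.C (a i))) := by
      apply mul_left_cancel₀ hC0
      rw [heq]
      ring
    have h2 : toQ (-(hpoly p n q * ∏ i ∈ Finset.range n,
        ((X : Polynomial ℤ) - Polynomial.C (a i)))) =
        - toQ (hpoly p n q * ∏ i ∈ Finset.range n,
          ((X : Polynomial ℤ) - Polynomial.C (a i))) := by
      rw [toQ, toQ, Polynomial.map_neg]
    have h3 := toQinj (h1.trans h2.symm)
    have h4 := congrArg Polynomial.leadingCoeff h3
    rw [hmonNg.leadingCoeff, leadingCoeff_neg, hmonNf.leadingCoeff] at h4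
    norm_num at h4

end Stmt9Aux


open Stmt9Aux in
/-- Example `typeI`, non-absolute irreducibility.
With `p, n, q, h, a_1, …, a_n` as in Statement 8 and moreover `a_1 ≠ a_2`, set
`f = h(x)·∏ (x − a_i)/p^n`. Then for every `k ≥ 2` the polynomials
`g₁ = h(x)(x−a₁)²∏_{i=3}^n (x−a_i)/p^n` and `g₂ = h(x)(x−a₂)²∏_{i=3}^n (x−a_i)/p^n`
are irreducible in `Int(ℤ)`, `f^k = g₁·g₂·f^(k−2)`, and this factorization of `f^k` is
essentially different from `f ⋯ f`; hence `f` is not absolutely irreducible. -/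
theorem stmt9 (p : ℕ) (hp : p.Prime) (hp2 : p ≠ 2)
    (n : ℕ) (hn : 1 < n)
    (q : ℕ) (hq : q.Prime) (hq1 : (q : ℤ) ≡ 1 [ZMOD ((p : ℤ) ^ (n + 1))])
    (hqbig : p ^ (n - 1) * (p - 1) + n < q)
    (a : ℕ → ℤ)
    (ha : ∀ i < n, (p : ℤ) ∣ a i)
    (hcover : ∃ c : ℤ, (p : ℤ) ∣ c ∧ ∀ i < n, ¬ (a i ≡ c [ZMOD ((p : ℤ) ^ 2)]))
    (hl : ∀ i < n, ∀ l : ℕ, l.Prime → l ≤ p ^ (n - 1) * (p - 1) + n → l ≠ p →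
        ¬ ((l : ℤ) ∣ a i))
    (hne : a 0 ≠ a 1) :
    ∀ k : ℕ, 2 ≤ k →
      ∃ (hf : fpoly p n q a ∈ IntZ) (hg₁ : gpoly p n q a 0 ∈ IntZ)
        (hg₂ : gpoly p n q a 1 ∈ IntZ),
        Irreducible (⟨fpoly p n q a, hf⟩ : IntZ) ∧
        Irreducible (⟨gpoly p n q a 0, hg₁⟩ : IntZ) ∧
        Irreducible (⟨gpoly p n q a 1, hg₂⟩ : IntZ) ∧
        (⟨fpoly p n q a, hf⟩ : IntZ) ^ k =
          ⟨gpoly p n q a 0, hg₁⟩ * ⟨gpoly p n q a 1, hg₂⟩ *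
            (⟨fpoly p n q a, hf⟩ : IntZ) ^ (k - 2) ∧
        ¬ EssentiallySame
            ((⟨gpoly p n q a 0, hg₁⟩ : IntZ) ::ₘ (⟨gpoly p n q a 1, hg₂⟩ : IntZ) ::ₘ
              Multiset.replicate (k - 2) (⟨fpoly p n q a, hf⟩ : IntZ))
            (Multiset.replicate k (⟨fpoly p n q a, hf⟩ : IntZ)) ∧
        ¬ AbsolutelyIrreducible (⟨fpoly p n q a, hf⟩ : IntZ) := by
  intro k hk
  obtain ⟨c, hc, hcov⟩ := hcover
  have pack : ∀ t : Multiset ℤ, Multiset.card t = n → (∀ r ∈ t, ∃ i < n, r = a i) →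
      ∃ hF : Fq p n q t ∈ IntZ, Irreducible (⟨Fq p n q t, hF⟩ : IntZ) := by
    intro t htc htm
    have ht1 : ∀ r ∈ t, (p:ℤ) ∣ r := fun r hr => by
      obtain ⟨i, hi, rfl⟩ := htm r hr; exact ha i hi
    have ht2 : ∀ r ∈ t, ¬ (r ≡ c [ZMOD ((p:ℤ)^2)]) := fun r hr => by
      obtain ⟨i, hi, rfl⟩ := htm r hr; exact hcov i hi
    have ht3 : ∀ r ∈ t, ∀ l : ℕ, l.Prime → l ≤ p ^ (n-1) * (p-1) + n → l ≠ p →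
        ¬ ((l:ℤ) ∣ r) := fun r hr => by
      obtain ⟨i, hi, rfl⟩ := htm r hr; exact hl i hi
    have hF := Fq_mem hp hn hq1 htc ht1
    exact ⟨hF, Fq_irreducible hp hp2 hn hq hq1 hqbig hc htc ht1 ht2 ht3 hF⟩
  obtain ⟨hFf, hIf⟩ := pack (tf a n) (tf_card a n) (fun r hr => tf_mem hr)
  obtain ⟨hFg0, hIg0⟩ := pack (tg a n 0) (tg_card a hn 0) (fun r hr => tg_mem (by omega) hr)
  obtain ⟨hFg1, hIg1⟩ := pack (tg a n 1) (tg_card a hn 1) (fun r hr => tg_mem hn hr)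
  have hf : fpoly p n q a ∈ IntZ := by rw [fpoly_eq]; exact hFf
  have hg0 : gpoly p n q a 0 ∈ IntZ := by rw [gpoly_eq]; exact hFg0
  have hg1 : gpoly p n q a 1 ∈ IntZ := by rw [gpoly_eq]; exact hFg1
  have hIf' : Irreducible (⟨fpoly p n q a, hf⟩ : IntZ) := by
    have heq : (⟨fpoly p n q a, hf⟩ : IntZ) = ⟨Fq p n q (tf a n), hFf⟩ :=
      Subtype.ext (fpoly_eq p n q a)
    rw [heq]; exact hIf
  have hIg0' : Irreducible (⟨gpoly p n q a 0, hg0⟩ : IntZ) := by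
    have heq : (⟨gpoly p n q a 0, hg0⟩ : IntZ) = ⟨Fq p n q (tg a n 0), hFg0⟩ :=
      Subtype.ext (gpoly_eq p n q a 0)
    rw [heq]; exact hIg0
  have hIg1' : Irreducible (⟨gpoly p n q a 1, hg1⟩ : IntZ) := by
    have heq : (⟨gpoly p n q a 1, hg1⟩ : IntZ) = ⟨Fq p n q (tg a n 1), hFg1⟩ :=
      Subtype.ext (gpoly_eq p n q a 1)
    rw [heq]; exact hIg1
  have hf2 : (⟨fpoly p n q a, hf⟩ : IntZ) ^ 2 =
      (⟨gpoly p n q a 0, hg0⟩ : IntZ) * ⟨gpoly p n q a 1, hg1⟩ := by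
    apply Subtype.ext
    push_cast [SubmonoidClass.coe_pow, MulMemClass.coe_mul]
    exact fsq p q hn a
  -- non-association
  have hnassoc : ∀ (j : ℕ) (hj : j = 0 ∨ j = 1) (hgj : gpoly p n q a j ∈ IntZ),
      ¬ Associated (⟨gpoly p n q a j, hgj⟩ : IntZ) ⟨fpoly p n q a, hf⟩ := by
    rintro j hj hgj ⟨uu, huu⟩
    obtain ⟨hne1, hne2⟩ := g_ne hp hn hq hne hj
    have hupm := IntZ_unit_poly uu.isUnit
    have hpoly' : gpoly p n q a j * ((uu : IntZ) : Polynomial ℚ) = fpoly p n q a := by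
      have := congrArg Subtype.val huu
      simpa using this
    rcases hupm with h | h <;> rw [h] at hpoly'
    · rw [mul_one] at hpoly'
      exact hne1 hpoly'
    · rw [mul_neg_one] at hpoly'
      exact hne2 (by rw [← hpoly']; ring)
  refine ⟨hf, hg0, hg1, hIf', hIg0', hIg1', ?_, ?_, ?_⟩
  · conv_lhs => rw [show k = 2 + (k - 2) by omega]
    rw [pow_add, hf2]
  · intro hes
    have h2 := (Multiset.rel_replicate_right.mp hes).2 _
      (Multiset.mem_cons_self _ _)
    exact hnassoc 0 (Or.inl rfl) hg0 h2
  · rintro ⟨-, habs⟩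
    have hprod : ((⟨gpoly p n q a 0, hg0⟩ : IntZ) ::ₘ {(⟨gpoly p n q a 1, hg1⟩ : IntZ)}).prod =
        (⟨fpoly p n q a, hf⟩ : IntZ) ^ 2 := by
      rw [Multiset.prod_cons, Multiset.prod_singleton, hf2]
    have hirr : ∀ x ∈ ((⟨gpoly p n q a 0, hg0⟩ : IntZ) ::ₘ
        {(⟨gpoly p n q a 1, hg1⟩ : IntZ)}), Irreducible x := by
      intro x hx
      rcases Multiset.mem_cons.mp hx with rfl | hx'
      · exact hIg0'
      · rw [Multiset.mem_singleton.mp hx']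
        exact hIg1'
    have hes2 := habs 2 one_lt_two _ hirr hprod
    have h2 := (Multiset.rel_replicate_right.mp hes2).2 _
      (Multiset.mem_cons_self _ _)
    exact hnassoc 0 (Or.inl rfl) hg0 h2

end
end

section
/- The polynomial f = (x−3)(x^3−17)(x^3−19)/3 lies in Int(Z) and is irreducible in Int(Z); the polynomials g = (x−3)^2(x^3−17)(x^3−19)/9, x^3−17, and x^3−19 lie in Int(Z) and are irreducible in Int(Z); f^2 = g · (x^3−17) · (x^3−19); and this factorization of f^2, of length 3, is essentially different from f · f. Hence f is a non-absolutely irreducible element of Int(Z) a power of which admits factorizations of different lengths. -/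
open Polynomial

noncomputable section

/-- `f = (x−3)(x³−17)(x³−19)/3`. -/
def f12 : Polynomial ℚ :=
  Polynomial.C ((3 : ℚ))⁻¹ *
    toQ ((X - Polynomial.C 3) * (X ^ 3 - Polynomial.C 17) * (X ^ 3 - Polynomial.C 19))

/-- `g = (x−3)²(x³−17)(x³−19)/9`. -/
def g12 : Polynomial ℚ :=
  Polynomial.C ((9 : ℚ))⁻¹ *
    toQ ((X - Polynomial.C 3) ^ 2 * (X ^ 3 - Polynomial.C 17) * (X ^ 3 - Polynomial.C 19))

/-- `x³−17`. -/
def u12 : Polynomial ℚ := toQ (X ^ 3 - Polynomial.C 17)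

/-- `x³−19`. -/
def v12 : Polynomial ℚ := toQ (X ^ 3 - Polynomial.C 19)



noncomputable section
def P1 : Polynomial ℚ := X - C 3
def P2 : Polynomial ℚ := X ^ 3 - C 17
def P3 : Polynomial ℚ := X ^ 3 - C 19

lemma no_cube (m : ℤ) (h8 : 8 < m) (h27 : m < 27) (r : ℚ) : r ^ 3 ≠ (m : ℚ) := by
  intro h
  have hx : ((r : ℝ)) ^ 3 = (m : ℝ) := by exact_mod_cast congrArg (fun q : ℚ => (q : ℝ)) h
  have hni : ¬∃ y : ℤ, (r : ℝ) = y := by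
    rintro ⟨y, hy⟩
    have hy' : r = (y : ℚ) := by exact_mod_cast hy
    rw [hy'] at h
    have hz : y ^ 3 = m := by exact_mod_cast h
    have h1 : 2 < y := by nlinarith [sq_nonneg y, sq_nonneg (y+1), sq_nonneg (y-1)]
    have h2 : y < 3 := by nlinarith [sq_nonneg y, sq_nonneg (y+1), sq_nonneg (y-3)]
    omega
  exact (irrational_nrt_of_notint_nrt 3 m hx hni (by norm_num)) ⟨r, rfl⟩

lemma irr_P1 : Irreducible P1 := irreducible_X_sub_C 3
lemma irr_P2 : Irreducible P2 :=
  X_pow_sub_C_irreducible_of_prime (by norm_num) (fun b h => no_cube 17 (by norm_num) (by norm_num) b (by exact_mod_cast h))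
lemma irr_P3 : Irreducible P3 :=
  X_pow_sub_C_irreducible_of_prime (by norm_num) (fun b h => no_cube 19 (by norm_num) (by norm_num) b (by exact_mod_cast h))

lemma pr_P1 : Prime P1 := irr_P1.prime
lemma pr_P2 : Prime P2 := irr_P2.prime
lemma pr_P3 : Prime P3 := irr_P3.prime

lemma deg_P1 : P1.degree = 1 := degree_X_sub_C 3
lemma deg_P2 : P2.degree = 3 := degree_X_pow_sub_C (by norm_num) 17
lemma deg_P3 : P3.degree = 3 := degree_X_pow_sub_C (by norm_num) 19
lemma P1_ne : P1 ≠ 0 := X_sub_C_ne_zero 3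

lemma nd_21 : ¬ P2 ∣ P1 := fun h => by
  have := degree_le_of_dvd h P1_ne
  rw [deg_P1, deg_P2] at this; exact absurd this (by decide)
lemma nd_31 : ¬ P3 ∣ P1 := fun h => by
  have := degree_le_of_dvd h P1_ne
  rw [deg_P1, deg_P3] at this; exact absurd this (by decide)
lemma nd_32 : ¬ P3 ∣ P2 := fun h => by
  have h2 : P3 ∣ C 19 - C 17 := by
    have he : P2 - P3 = C 19 - C 17 := by simp only [P2, P3]; ring
    simpa [he] using dvd_sub h dvd_rfl
  have := degree_le_of_dvd h2 (by rw [← C_sub]; exact C_ne_zero.mpr (by norm_num))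
  rw [deg_P3, ← C_sub, degree_C (by norm_num)] at this; exact absurd this (by decide)
lemma nd_23 : ¬ P2 ∣ P3 := fun h => by
  have h2 : P2 ∣ C 17 - C 19 := by
    have he : P3 - P2 = C 17 - C 19 := by simp only [P2, P3]; ring
    simpa [he] using dvd_sub h dvd_rfl
  have := degree_le_of_dvd h2 (by rw [← C_sub]; exact C_ne_zero.mpr (by norm_num))
  rw [deg_P2, ← C_sub, degree_C (by norm_num)] at this; exact absurd this (by decide)

lemma mul_dvd' {p q a : Polynomial ℚ} (hq : Prime q) (hpa : p ∣ a) (hqa : q ∣ a)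
    (hnd : ¬ q ∣ p) : p * q ∣ a := by
  obtain ⟨t, rfl⟩ := hpa
  rcases (hq.dvd_mul.mp hqa) with h|h
  · exact absurd h hnd
  · obtain ⟨u, rfl⟩ := h
    exact ⟨u, by ring⟩

lemma finish_split {Pa Pb : Polynomial ℚ} (r : ℚ) (hr : r ≠ 0) (hP : Pa * Pb ≠ 0)
    {a b : Polynomial ℚ} (ha : Pa ∣ a) (hb : Pb ∣ b) (h : a * b = C r * (Pa * Pb)) :
    ∃ c c' : ℚ, c * c' = r ∧ a = C c * Pa ∧ b = C c' * Pb := by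
  obtain ⟨t, rfl⟩ := ha
  obtain ⟨s, rfl⟩ := hb
  have hts : t * s = C r := by
    have h2 : (Pa * Pb) * (t * s) = (Pa * Pb) * C r := by
      linear_combination h
    exact mul_left_cancel₀ hP h2
  have hu : IsUnit t ∧ IsUnit s := by
    have : IsUnit (t * s) := hts ▸ (isUnit_C.mpr hr.isUnit)
    exact ⟨isUnit_of_mul_isUnit_left this, isUnit_of_mul_isUnit_right this⟩
  obtain ⟨c, -, hc⟩ := Polynomial.isUnit_iff.mp hu.1
  obtain ⟨c', -, hc'⟩ := Polynomial.isUnit_iff.mp hu.2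
  refine ⟨c, c', ?_, by rw [← hc]; ring, by rw [← hc']; ring⟩
  have : C (c * c') = C r := by rw [C_mul, hc, hc', hts]
  exact C_injective this


lemma P2_ne : P2 ≠ 0 := pr_P2.ne_zero
lemma P3_ne : P3 ≠ 0 := pr_P3.ne_zero
lemma nd_3_12 : ¬ P3 ∣ P1 * P2 := fun hd => (pr_P3.dvd_mul.mp hd).elim nd_31 nd_32

lemma split3 (r : ℚ) (hr : r ≠ 0) (a b : Polynomial ℚ)
    (h : a * b = C r * (P1 * P2 * P3)) :
    ∃ c c' : ℚ, c * c' = r ∧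
      ((a = C c * 1 ∧ b = C c' * (P1 * P2 * P3)) ∨
       (a = C c * P1 ∧ b = C c' * (P2 * P3)) ∨
       (a = C c * P2 ∧ b = C c' * (P1 * P3)) ∨
       (a = C c * P3 ∧ b = C c' * (P1 * P2)) ∨
       (a = C c * (P1 * P2) ∧ b = C c' * P3) ∨
       (a = C c * (P1 * P3) ∧ b = C c' * P2) ∨
       (a = C c * (P2 * P3) ∧ b = C c' * P1) ∨
       (a = C c * (P1 * P2 * P3) ∧ b = C c' * 1)) := by
  have hd1 : P1 ∣ a ∨ P1 ∣ b := pr_P1.dvd_mul.mp ⟨C r * (P2 * P3), by linear_combination h⟩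
  have hd2 : P2 ∣ a ∨ P2 ∣ b := pr_P2.dvd_mul.mp ⟨C r * (P1 * P3), by linear_combination h⟩
  have hd3 : P3 ∣ a ∨ P3 ∣ b := pr_P3.dvd_mul.mp ⟨C r * (P1 * P2), by linear_combination h⟩
  rcases hd1 with h1|h1 <;> rcases hd2 with h2|h2 <;> rcases hd3 with h3|h3
  · obtain ⟨c, c', hcc, ha, hb⟩ := finish_split (Pa := P1 * P2 * P3) (Pb := 1) r hr
      (by simp [mul_ne_zero, P1_ne, P2_ne, P3_ne])
      (mul_dvd' pr_P3 (mul_dvd' pr_P2 h1 h2 nd_21) h3 nd_3_12)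
      (one_dvd b) (by linear_combination h)
    exact ⟨c, c', hcc, Or.inr <| Or.inr <| Or.inr <| Or.inr <| Or.inr <| Or.inr <| Or.inr ⟨ha, hb⟩⟩
  · obtain ⟨c, c', hcc, ha, hb⟩ := finish_split (Pa := P1 * P2) (Pb := P3) r hr
      (by simp [mul_ne_zero, P1_ne, P2_ne, P3_ne])
      (mul_dvd' pr_P2 h1 h2 nd_21) h3 (by linear_combination h)
    exact ⟨c, c', hcc, Or.inr <| Or.inr <| Or.inr <| Or.inr <| Or.inl ⟨ha, hb⟩⟩
  · obtain ⟨c, c', hcc, ha, hb⟩ := finish_split (Pa := P1 * P3) (Pb := P2) r hr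
      (by simp [mul_ne_zero, P1_ne, P2_ne, P3_ne])
      (mul_dvd' pr_P3 h1 h3 nd_31) h2 (by linear_combination h)
    exact ⟨c, c', hcc, Or.inr <| Or.inr <| Or.inr <| Or.inr <| Or.inr <| Or.inl ⟨ha, hb⟩⟩
  · obtain ⟨c, c', hcc, ha, hb⟩ := finish_split (Pa := P1) (Pb := P2 * P3) r hr
      (by simp [mul_ne_zero, P1_ne, P2_ne, P3_ne])
      h1 (mul_dvd' pr_P3 h2 h3 nd_32) (by linear_combination h)
    exact ⟨c, c', hcc, Or.inr <| Or.inl ⟨ha, hb⟩⟩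
  · obtain ⟨c, c', hcc, ha, hb⟩ := finish_split (Pa := P2 * P3) (Pb := P1) r hr
      (by simp [mul_ne_zero, P1_ne, P2_ne, P3_ne])
      (mul_dvd' pr_P3 h2 h3 nd_32) h1 (by linear_combination h)
    exact ⟨c, c', hcc, Or.inr <| Or.inr <| Or.inr <| Or.inr <| Or.inr <| Or.inr <| Or.inl ⟨ha, hb⟩⟩
  · obtain ⟨c, c', hcc, ha, hb⟩ := finish_split (Pa := P2) (Pb := P1 * P3) r hr
      (by simp [mul_ne_zero, P1_ne, P2_ne, P3_ne])
      h2 (mul_dvd' pr_P3 h1 h3 nd_31) (by linear_combination h)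
    exact ⟨c, c', hcc, Or.inr <| Or.inr <| Or.inl ⟨ha, hb⟩⟩
  · obtain ⟨c, c', hcc, ha, hb⟩ := finish_split (Pa := P3) (Pb := P1 * P2) r hr
      (by simp [mul_ne_zero, P1_ne, P2_ne, P3_ne])
      h3 (mul_dvd' pr_P2 h1 h2 nd_21) (by linear_combination h)
    exact ⟨c, c', hcc, Or.inr <| Or.inr <| Or.inr <| Or.inl ⟨ha, hb⟩⟩
  · obtain ⟨c, c', hcc, ha, hb⟩ := finish_split (Pa := 1) (Pb := P1 * P2 * P3) r hr
      (by simp [mul_ne_zero, P1_ne, P2_ne, P3_ne])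
      (one_dvd a)
      (mul_dvd' pr_P3 (mul_dvd' pr_P2 h1 h2 nd_21) h3 nd_3_12)
      (by linear_combination h)
    exact ⟨c, c', hcc, Or.inl ⟨ha, hb⟩⟩

lemma c_int (c : ℚ) (P : Polynomial ℚ) (hmem : C c * P ∈ IntZ)
    (n₁ n₂ e₁ e₂ u v g : ℤ) (h₁ : P.eval (n₁ : ℚ) = (e₁ : ℚ)) (h₂ : P.eval (n₂ : ℚ) = (e₂ : ℚ))
    (hcombo : u * e₁ + v * e₂ = g) : ∃ m : ℤ, c * (g : ℚ) = (m : ℚ) := by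
  obtain ⟨m₁, hm₁⟩ := hmem n₁
  obtain ⟨m₂, hm₂⟩ := hmem n₂
  rw [eval_mul, eval_C, h₁] at hm₁
  rw [eval_mul, eval_C, h₂] at hm₂
  refine ⟨u * m₁ + v * m₂, ?_⟩
  have hc : ((u : ℚ) * (e₁ : ℚ) + (v : ℚ) * (e₂ : ℚ)) = (g : ℚ) := by exact_mod_cast congrArg (fun z : ℤ => (z : ℚ)) hcombo
  push_cast
  linear_combination (u : ℚ) * hm₁ + (v : ℚ) * hm₂ + c * hc.symm

lemma c_is_int (c : ℚ) (P : Polynomial ℚ) (hmem : C c * P ∈ IntZ)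
    (n₁ n₂ e₁ e₂ u v : ℤ) (h₁ : P.eval (n₁ : ℚ) = (e₁ : ℚ)) (h₂ : P.eval (n₂ : ℚ) = (e₂ : ℚ))
    (hcombo : u * e₁ + v * e₂ = 1) : ∃ m : ℤ, c = (m : ℚ) := by
  obtain ⟨m, hm⟩ := c_int c P hmem n₁ n₂ e₁ e₂ u v 1 h₁ h₂ hcombo
  exact ⟨m, by simpa using hm⟩

lemma contra_int (c c' : ℚ) (m m' N : ℤ) (hm : c = (m : ℚ)) (hm' : c' = (m' : ℚ))
    (hN : 2 ≤ N) (hcc : c * c' = ((N : ℤ) : ℚ)⁻¹) : False := by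
  have hN0 : ((N : ℤ) : ℚ) ≠ 0 := by
    have : N ≠ 0 := by omega
    exact_mod_cast this
  have hq : ((N : ℤ) : ℚ) * ((m : ℚ) * (m' : ℚ)) = 1 := by
    rw [← hm, ← hm', hcc]
    exact mul_inv_cancel₀ hN0
  have hz : N * (m * m') = 1 := by exact_mod_cast hq
  have := Int.isUnit_iff.mp (IsUnit.of_mul_eq_one _ hz)
  omega

lemma const_unit (c c' : ℚ) (m : ℤ) (hm : c = (m : ℚ)) (P : Polynomial ℚ)
    (hb : C c' * P ∈ IntZ) (N : ℤ) (hN : ((N : ℤ) : ℚ) ≠ 0) (hcc : c * c' = ((N : ℤ) : ℚ)⁻¹)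
    (n₁ n₂ E₁ E₂ u v : ℤ)
    (h₁ : P.eval (n₁ : ℚ) = ((N * E₁ : ℤ) : ℚ)) (h₂ : P.eval (n₂ : ℚ) = ((N * E₂ : ℤ) : ℚ))
    (hcombo : u * E₁ + v * E₂ = 1) : m = 1 ∨ m = -1 := by
  have hccN : c * c' * ((N : ℤ) : ℚ) = 1 := by rw [hcc]; exact inv_mul_cancel₀ hN
  obtain ⟨m₁, hm₁⟩ := hb n₁
  obtain ⟨m₂, hm₂⟩ := hb n₂
  rw [eval_mul, eval_C, h₁] at hm₁
  rw [eval_mul, eval_C, h₂] at hm₂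
  have q₁ : m * m₁ = E₁ := by
    have : ((m * m₁ : ℤ) : ℚ) = ((E₁ : ℤ) : ℚ) := by
      push_cast at hm₁ ⊢
      rw [← hm]
      linear_combination (-c) * hm₁ + ((E₁ : ℤ) : ℚ) * hccN
    exact_mod_cast this
  have q₂ : m * m₂ = E₂ := by
    have : ((m * m₂ : ℤ) : ℚ) = ((E₂ : ℤ) : ℚ) := by
      push_cast at hm₂ ⊢
      rw [← hm]
      linear_combination (-c) * hm₂ + ((E₂ : ℤ) : ℚ) * hccN
    exact_mod_cast this
  have hdvd : m ∣ 1 := by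
    have : m ∣ u * E₁ + v * E₂ := dvd_add ⟨u * m₁, by rw [← q₁]; ring⟩ ⟨v * m₂, by rw [← q₂]; ring⟩
    rwa [hcombo] at this
  exact Int.isUnit_iff.mp (isUnit_of_dvd_one hdvd)

lemma u12_eq : u12 = P2 := by
  simp [u12, toQ, P2, Polynomial.map_sub, Polynomial.map_pow, Polynomial.map_X, Polynomial.map_C]
  exact (map_ofNat C 17).symm

lemma v12_eq : v12 = P3 := by
  simp [v12, toQ, P3, Polynomial.map_sub, Polynomial.map_pow, Polynomial.map_X, Polynomial.map_C]
  exact (map_ofNat C 19).symm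

lemma f12_eq : f12 = C (3⁻¹ : ℚ) * (P1 * P2 * P3) := by
  simp only [f12, toQ, Polynomial.map_mul, Polynomial.map_sub, Polynomial.map_pow,
    Polynomial.map_X, Polynomial.map_C, P1, P2, P3]
  norm_num

lemma g12_eq : g12 = C (9⁻¹ : ℚ) * (P1 * (P1 * P2 * P3)) := by
  simp only [g12, toQ, Polynomial.map_mul, Polynomial.map_sub, Polynomial.map_pow,
    Polynomial.map_X, Polynomial.map_C, P1, P2, P3]
  norm_num
  ring

lemma hu_mem : u12 ∈ IntZ := by
  intro n
  exact ⟨n ^ 3 - 17, by rw [u12_eq]; simp only [P2, eval_sub, eval_pow, eval_X, eval_C]; push_cast; ring⟩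

lemma hv_mem : v12 ∈ IntZ := by
  intro n
  exact ⟨n ^ 3 - 19, by rw [v12_eq]; simp only [P3, eval_sub, eval_pow, eval_X, eval_C]; push_cast; ring⟩

lemma hf_mem : f12 ∈ IntZ := by
  intro n
  have hdvd : (3 : ℤ) ∣ (n - 3) * (n ^ 3 - 17) * (n ^ 3 - 19) := by
    have hz : (((n - 3) * (n ^ 3 - 17) * (n ^ 3 - 19) : ℤ) : ZMod 3) = 0 := by
      push_cast
      generalize ((n : ZMod 3)) = x
      revert x
      decide
    exact_mod_cast (ZMod.intCast_zmod_eq_zero_iff_dvd _ 3).mp hz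
  obtain ⟨k, hk⟩ := hdvd
  refine ⟨k, ?_⟩
  rw [f12_eq]
  have hcast : (((n : ℚ)) - 3) * ((n : ℚ) ^ 3 - 17) * ((n : ℚ) ^ 3 - 19) = (((n - 3) * (n ^ 3 - 17) * (n ^ 3 - 19) : ℤ) : ℚ) := by
    push_cast; ring
  simp only [eval_mul, eval_C, P1, P2, P3, eval_sub, eval_pow, eval_X]
  rw [hcast, hk]
  push_cast
  ring

lemma hg_mem : g12 ∈ IntZ := by
  intro n
  have hdvd : (9 : ℤ) ∣ (n - 3) * ((n - 3) * (n ^ 3 - 17) * (n ^ 3 - 19)) := by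
    have hz : (((n - 3) * ((n - 3) * (n ^ 3 - 17) * (n ^ 3 - 19)) : ℤ) : ZMod 9) = 0 := by
      push_cast
      generalize ((n : ZMod 9)) = x
      revert x
      decide
    exact_mod_cast (ZMod.intCast_zmod_eq_zero_iff_dvd _ 9).mp hz
  obtain ⟨k, hk⟩ := hdvd
  refine ⟨k, ?_⟩
  rw [g12_eq]
  have hcast : (((n : ℚ)) - 3) * ((((n : ℚ)) - 3) * ((n : ℚ) ^ 3 - 17) * ((n : ℚ) ^ 3 - 19)) = (((n - 3) * ((n - 3) * (n ^ 3 - 17) * (n ^ 3 - 19)) : ℤ) : ℚ) := by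
    push_cast; ring
  simp only [eval_mul, eval_C, P1, P2, P3, eval_sub, eval_pow, eval_X]
  rw [hcast, hk]
  push_cast
  ring

lemma unit_of_pm (A : IntZ) (c : ℚ) (m : ℤ) (hA : (A : Polynomial ℚ) = C c)
    (hm : c = (m : ℚ)) (hpm : m = 1 ∨ m = -1) : IsUnit A := by
  rcases hpm with rfl|rfl
  · have : A = 1 := by
      apply Subtype.ext
      rw [hA, hm]; simp
    rw [this]; exact isUnit_one
  · have : A = -1 := by
      apply Subtype.ext
      rw [hA, hm]; simp
    rw [this]; exact isUnit_one.neg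

lemma not_unit_of (A : IntZ) (x y vx vy : ℚ) (hxy : vx ≠ vy)
    (hx : (A : Polynomial ℚ).eval x = vx) (hy : (A : Polynomial ℚ).eval y = vy) :
    ¬ IsUnit A := by
  intro h
  have h2 : IsUnit (A : Polynomial ℚ) := h.map (Subring.subtype IntZ)
  obtain ⟨r, -, hr⟩ := Polynomial.isUnit_iff.mp h2
  rw [← hr] at hx hy
  rw [eval_C] at hx hy
  exact hxy (hx ▸ hy ▸ rfl)

lemma coe_mul_eq (x : IntZ) (a b : IntZ) (h : x = a * b) :
    (x : Polynomial ℚ) = (a : Polynomial ℚ) * (b : Polynomial ℚ) := by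
  rw [h]; rfl

lemma irr_u : Irreducible (⟨u12, hu_mem⟩ : IntZ) := by
  constructor
  · exact not_unit_of _ 0 1 (-17) (-16) (by norm_num)
      (by show u12.eval 0 = _; rw [u12_eq]; norm_num [P2])
      (by show u12.eval 1 = _; rw [u12_eq]; norm_num [P2])
  · rintro a b hab
    have hval : (a : Polynomial ℚ) * (b : Polynomial ℚ) = C 1 * (P2 * 1) := by
      rw [C_1, one_mul, mul_one, ← u12_eq]
      exact (coe_mul_eq _ a b hab).symm
    have hd : P2 ∣ (a : Polynomial ℚ) ∨ P2 ∣ (b : Polynomial ℚ) :=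
      pr_P2.dvd_mul.mp ⟨C 1 * 1, by linear_combination hval⟩
    rcases hd with hd|hd
    · obtain ⟨c, c', hcc, ha, hb⟩ := finish_split (Pa := P2) (Pb := 1) 1 one_ne_zero
        (by simp [P2_ne]) hd (one_dvd _) hval
      obtain ⟨m', hm'⟩ := c_is_int c' 1 (hb ▸ b.2) 0 0 1 1 1 0 (by norm_num) (by norm_num) (by norm_num)
      have hpm := const_unit c' c m' hm' P2 (ha ▸ a.2) 1 (by norm_num)
        (by rw [mul_comm, hcc]; norm_num) 0 1 (-17) (-16) (-1) 1
        (by norm_num [P2]) (by norm_num [P2]) (by norm_num)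
      exact Or.inr (unit_of_pm b c' m' (by rw [hb, mul_one]) hm' hpm)
    · obtain ⟨c, c', hcc, ha, hb⟩ := finish_split (Pa := 1) (Pb := P2) (a := (a : Polynomial ℚ)) (b := (b : Polynomial ℚ)) 1 one_ne_zero
        (by simp [P2_ne]) (one_dvd _) hd (by linear_combination hval)
      obtain ⟨m, hm⟩ := c_is_int c 1 (ha ▸ a.2) 0 0 1 1 1 0 (by norm_num) (by norm_num) (by norm_num)
      have hpm := const_unit c c' m hm P2 (hb ▸ b.2) 1 (by norm_num)
        (by rw [hcc]; norm_num) 0 1 (-17) (-16) (-1) 1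
        (by norm_num [P2]) (by norm_num [P2]) (by norm_num)
      exact Or.inl (unit_of_pm a c m (by rw [ha, mul_one]) hm hpm)

lemma irr_v : Irreducible (⟨v12, hv_mem⟩ : IntZ) := by
  constructor
  · exact not_unit_of _ 0 1 (-19) (-18) (by norm_num)
      (by show v12.eval 0 = _; rw [v12_eq]; norm_num [P3])
      (by show v12.eval 1 = _; rw [v12_eq]; norm_num [P3])
  · rintro a b hab
    have hval : (a : Polynomial ℚ) * (b : Polynomial ℚ) = C 1 * (P3 * 1) := by
      rw [C_1, one_mul, mul_one, ← v12_eq]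
      exact (coe_mul_eq _ a b hab).symm
    have hd : P3 ∣ (a : Polynomial ℚ) ∨ P3 ∣ (b : Polynomial ℚ) :=
      pr_P3.dvd_mul.mp ⟨C 1 * 1, by linear_combination hval⟩
    rcases hd with hd|hd
    · obtain ⟨c, c', hcc, ha, hb⟩ := finish_split (Pa := P3) (Pb := 1) 1 one_ne_zero
        (by simp [P3_ne]) hd (one_dvd _) hval
      obtain ⟨m', hm'⟩ := c_is_int c' 1 (hb ▸ b.2) 0 0 1 1 1 0 (by norm_num) (by norm_num) (by norm_num)
      have hpm := const_unit c' c m' hm' P3 (ha ▸ a.2) 1 (by norm_num)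
        (by rw [mul_comm, hcc]; norm_num) 0 1 (-19) (-18) (-1) 1
        (by norm_num [P3]) (by norm_num [P3]) (by norm_num)
      exact Or.inr (unit_of_pm b c' m' (by rw [hb, mul_one]) hm' hpm)
    · obtain ⟨c, c', hcc, ha, hb⟩ := finish_split (Pa := 1) (Pb := P3) (a := (a : Polynomial ℚ)) (b := (b : Polynomial ℚ)) 1 one_ne_zero
        (by simp [P3_ne]) (one_dvd _) hd (by linear_combination hval)
      obtain ⟨m, hm⟩ := c_is_int c 1 (ha ▸ a.2) 0 0 1 1 1 0 (by norm_num) (by norm_num) (by norm_num)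
      have hpm := const_unit c c' m hm P3 (hb ▸ b.2) 1 (by norm_num)
        (by rw [hcc]; norm_num) 0 1 (-19) (-18) (-1) 1
        (by norm_num [P3]) (by norm_num [P3]) (by norm_num)
      exact Or.inl (unit_of_pm a c m (by rw [ha, mul_one]) hm hpm)

lemma irr_f : Irreducible (⟨f12, hf_mem⟩ : IntZ) := by
  constructor
  · exact not_unit_of _ 0 1 (-323) (-192) (by norm_num)
      (by show f12.eval 0 = _; rw [f12_eq]; norm_num [P1, P2, P3])
      (by show f12.eval 1 = _; rw [f12_eq]; norm_num [P1, P2, P3])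
  · rintro a b hab
    have hval : (a : Polynomial ℚ) * (b : Polynomial ℚ) = C (3⁻¹ : ℚ) * (P1 * P2 * P3) := by
      rw [← f12_eq]; exact (coe_mul_eq _ a b hab).symm
    obtain ⟨c, c', hcc, hcase⟩ := split3 (3⁻¹ : ℚ) (by norm_num) _ _ hval
    rcases hcase with ⟨ha, hb⟩|⟨ha, hb⟩|⟨ha, hb⟩|⟨ha, hb⟩|⟨ha, hb⟩|⟨ha, hb⟩|⟨ha, hb⟩|⟨ha, hb⟩
    · -- a const, b full
      obtain ⟨m, hm⟩ := c_is_int c 1 (ha ▸ a.2) 0 0 1 1 1 0 (by norm_num) (by norm_num) (by norm_num)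
      have hpm := const_unit c c' m hm (P1 * P2 * P3) (hb ▸ b.2) 3 (by norm_num)
        (by rw [hcc]; norm_num) 1 0 (-192) (-323) (-143) 85
        (by norm_num [P1, P2, P3]) (by norm_num [P1, P2, P3]) (by norm_num)
      exact Or.inl (unit_of_pm a c m (by rw [ha, mul_one]) hm hpm)
    · -- P1 | P2*P3
      obtain ⟨m, hm⟩ := c_is_int c P1 (ha ▸ a.2) 4 4 1 1 1 0 (by norm_num [P1]) (by norm_num [P1]) (by norm_num)
      obtain ⟨m', hm'⟩ := c_is_int c' (P2 * P3) (hb ▸ b.2) 2 3 99 80 (-21) 26 (by norm_num [P2, P3]) (by norm_num [P2, P3]) (by norm_num)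
      exact absurd (contra_int c c' m m' 3 hm hm' (by norm_num) (by rw [hcc]; norm_num)) id
    · -- P2 | P1*P3
      obtain ⟨m, hm⟩ := c_is_int c P2 (ha ▸ a.2) 3 2 10 (-9) 1 1 (by norm_num [P2]) (by norm_num [P2]) (by norm_num)
      obtain ⟨m', hm'⟩ := c_is_int c' (P1 * P3) (hb ▸ b.2) 4 2 45 11 1 (-4) (by norm_num [P1, P3]) (by norm_num [P1, P3]) (by norm_num)
      exact absurd (contra_int c c' m m' 3 hm hm' (by norm_num) (by rw [hcc]; norm_num)) id
    · -- P3 | P1*P2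
      obtain ⟨m, hm⟩ := c_is_int c P3 (ha ▸ a.2) 3 2 8 (-11) (-4) (-3) (by norm_num [P3]) (by norm_num [P3]) (by norm_num)
      obtain ⟨m', hm'⟩ := c_is_int c' (P1 * P2) (hb ▸ b.2) 4 2 47 9 (-4) 21 (by norm_num [P1, P2]) (by norm_num [P1, P2]) (by norm_num)
      exact absurd (contra_int c c' m m' 3 hm hm' (by norm_num) (by rw [hcc]; norm_num)) id
    · -- P1*P2 | P3
      obtain ⟨m, hm⟩ := c_is_int c (P1 * P2) (ha ▸ a.2) 4 2 47 9 (-4) 21 (by norm_num [P1, P2]) (by norm_num [P1, P2]) (by norm_num)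
      obtain ⟨m', hm'⟩ := c_is_int c' P3 (hb ▸ b.2) 3 2 8 (-11) (-4) (-3) (by norm_num [P3]) (by norm_num [P3]) (by norm_num)
      exact absurd (contra_int c c' m m' 3 hm hm' (by norm_num) (by rw [hcc]; norm_num)) id
    · -- P1*P3 | P2
      obtain ⟨m, hm⟩ := c_is_int c (P1 * P3) (ha ▸ a.2) 4 2 45 11 1 (-4) (by norm_num [P1, P3]) (by norm_num [P1, P3]) (by norm_num)
      obtain ⟨m', hm'⟩ := c_is_int c' P2 (hb ▸ b.2) 3 2 10 (-9) 1 1 (by norm_num [P2]) (by norm_num [P2]) (by norm_num)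
      exact absurd (contra_int c c' m m' 3 hm hm' (by norm_num) (by rw [hcc]; norm_num)) id
    · -- P2*P3 | P1
      obtain ⟨m, hm⟩ := c_is_int c (P2 * P3) (ha ▸ a.2) 2 3 99 80 (-21) 26 (by norm_num [P2, P3]) (by norm_num [P2, P3]) (by norm_num)
      obtain ⟨m', hm'⟩ := c_is_int c' P1 (hb ▸ b.2) 4 4 1 1 1 0 (by norm_num [P1]) (by norm_num [P1]) (by norm_num)
      exact absurd (contra_int c c' m m' 3 hm hm' (by norm_num) (by rw [hcc]; norm_num)) id
    · -- a full, b const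
      obtain ⟨m', hm'⟩ := c_is_int c' 1 (hb ▸ b.2) 0 0 1 1 1 0 (by norm_num) (by norm_num) (by norm_num)
      have hpm := const_unit c' c m' hm' (P1 * P2 * P3) (ha ▸ a.2) 3 (by norm_num)
        (by rw [mul_comm, hcc]; norm_num) 1 0 (-192) (-323) (-143) 85
        (by norm_num [P1, P2, P3]) (by norm_num [P1, P2, P3]) (by norm_num)
      exact Or.inr (unit_of_pm b c' m' (by rw [hb, mul_one]) hm' hpm)

lemma irr_g : Irreducible (⟨g12, hg_mem⟩ : IntZ) := by
  constructor
  · exact not_unit_of _ 2 4 11 235 (by norm_num)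
      (by show g12.eval 2 = _; rw [g12_eq]; norm_num [P1, P2, P3])
      (by show g12.eval 4 = _; rw [g12_eq]; norm_num [P1, P2, P3])
  · rintro a b hab
    have hval : (a : Polynomial ℚ) * (b : Polynomial ℚ) = C (9⁻¹ : ℚ) * (P1 * (P1 * P2 * P3)) := by
      rw [← g12_eq]; exact (coe_mul_eq _ a b hab).symm
    have hd : P1 ∣ (a : Polynomial ℚ) ∨ P1 ∣ (b : Polynomial ℚ) :=
      pr_P1.dvd_mul.mp ⟨C (9⁻¹ : ℚ) * (P1 * P2 * P3), by linear_combination hval⟩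
    rcases hd with ⟨a₁, ha1⟩ | ⟨b₁, hb1⟩
    · rw [ha1] at hval
      have h3 : a₁ * (b : Polynomial ℚ) = C (9⁻¹ : ℚ) * (P1 * P2 * P3) :=
        mul_left_cancel₀ P1_ne (by linear_combination hval)
      obtain ⟨c, c', hcc, hcase⟩ := split3 (9⁻¹ : ℚ) (by norm_num) _ _ h3
      rcases hcase with ⟨ha, hb⟩|⟨ha, hb⟩|⟨ha, hb⟩|⟨ha, hb⟩|⟨ha, hb⟩|⟨ha, hb⟩|⟨ha, hb⟩|⟨ha, hb⟩
      · -- a = C c * (P1*1), b = C c' * (P1*P2*P3) : fixdiv 3 on b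
        have hmemA : C c * (P1 * 1) ∈ IntZ := by
          have hx : (a : Polynomial ℚ) = C c * (P1 * 1) := by rw [ha1, ha]; ring
          exact hx ▸ a.2
        obtain ⟨m, hm⟩ := c_is_int c (P1 * 1) hmemA 4 4 1 1 1 0 (by norm_num [P1]) (by norm_num [P1]) (by norm_num)
        obtain ⟨m', hm'⟩ := c_int c' (P1 * P2 * P3) (hb ▸ b.2) 0 2 (-969) (-99) (-14) 137 3 (by norm_num [P1, P2, P3]) (by norm_num [P1, P2, P3]) (by norm_num)
        have hm'3 : (3 : ℚ) * c' = (m' : ℚ) := by push_cast at hm'; linarith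
        exact absurd (contra_int c ((3:ℚ) * c') m m' 3 hm hm'3 (by norm_num)
          (by push_cast; rw [show c * ((3:ℚ) * c') = 3 * (c * c') by ring, hcc]; norm_num)) id
      · -- a = C c * (P1*P1), b = C c' * (P2*P3)
        have hmemA : C c * (P1 * P1) ∈ IntZ := by
          have hx : (a : Polynomial ℚ) = C c * (P1 * P1) := by rw [ha1, ha]; ring
          exact hx ▸ a.2
        obtain ⟨m, hm⟩ := c_is_int c (P1 * P1) hmemA 4 4 1 1 1 0 (by norm_num [P1]) (by norm_num [P1]) (by norm_num)
        obtain ⟨m', hm'⟩ := c_is_int c' (P2 * P3) (hb ▸ b.2) 2 3 99 80 (-21) 26 (by norm_num [P2, P3]) (by norm_num [P2, P3]) (by norm_num)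
        exact absurd (contra_int c c' m m' 9 hm hm' (by norm_num) (by rw [hcc]; norm_num)) id
      · -- a = C c * (P1*P2), b = C c' * (P1*P3)
        have hmemA : C c * (P1 * P2) ∈ IntZ := by
          have hx : (a : Polynomial ℚ) = C c * (P1 * P2) := by rw [ha1, ha]; ring
          exact hx ▸ a.2
        obtain ⟨m, hm⟩ := c_is_int c (P1 * P2) hmemA 4 2 47 9 (-4) 21 (by norm_num [P1, P2]) (by norm_num [P1, P2]) (by norm_num)
        obtain ⟨m', hm'⟩ := c_is_int c' (P1 * P3) (hb ▸ b.2) 4 2 45 11 1 (-4) (by norm_num [P1, P3]) (by norm_num [P1, P3]) (by norm_num)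
        exact absurd (contra_int c c' m m' 9 hm hm' (by norm_num) (by rw [hcc]; norm_num)) id
      · -- a = C c * (P1*P3), b = C c' * (P1*P2)
        have hmemA : C c * (P1 * P3) ∈ IntZ := by
          have hx : (a : Polynomial ℚ) = C c * (P1 * P3) := by rw [ha1, ha]; ring
          exact hx ▸ a.2
        obtain ⟨m, hm⟩ := c_is_int c (P1 * P3) hmemA 4 2 45 11 1 (-4) (by norm_num [P1, P3]) (by norm_num [P1, P3]) (by norm_num)
        obtain ⟨m', hm'⟩ := c_is_int c' (P1 * P2) (hb ▸ b.2) 4 2 47 9 (-4) 21 (by norm_num [P1, P2]) (by norm_num [P1, P2]) (by norm_num)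
        exact absurd (contra_int c c' m m' 9 hm hm' (by norm_num) (by rw [hcc]; norm_num)) id
      · -- a = C c * (P1*(P1*P2)), b = C c' * P3
        have hmemA : C c * (P1 * (P1 * P2)) ∈ IntZ := by
          have hx : (a : Polynomial ℚ) = C c * (P1 * (P1 * P2)) := by rw [ha1, ha]; ring
          exact hx ▸ a.2
        obtain ⟨m, hm⟩ := c_is_int c (P1 * (P1 * P2)) hmemA 4 2 47 (-9) (-4) (-21) (by norm_num [P1, P2]) (by norm_num [P1, P2]) (by norm_num)
        obtain ⟨m', hm'⟩ := c_is_int c' P3 (hb ▸ b.2) 3 2 8 (-11) (-4) (-3) (by norm_num [P3]) (by norm_num [P3]) (by norm_num)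
        exact absurd (contra_int c c' m m' 9 hm hm' (by norm_num) (by rw [hcc]; norm_num)) id
      · -- a = C c * (P1*(P1*P3)), b = C c' * P2
        have hmemA : C c * (P1 * (P1 * P3)) ∈ IntZ := by
          have hx : (a : Polynomial ℚ) = C c * (P1 * (P1 * P3)) := by rw [ha1, ha]; ring
          exact hx ▸ a.2
        obtain ⟨m, hm⟩ := c_is_int c (P1 * (P1 * P3)) hmemA 4 2 45 (-11) 1 4 (by norm_num [P1, P3]) (by norm_num [P1, P3]) (by norm_num)
        obtain ⟨m', hm'⟩ := c_is_int c' P2 (hb ▸ b.2) 3 2 10 (-9) 1 1 (by norm_num [P2]) (by norm_num [P2]) (by norm_num)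
        exact absurd (contra_int c c' m m' 9 hm hm' (by norm_num) (by rw [hcc]; norm_num)) id
      · -- a = C c * (P1*(P2*P3)) : fixdiv 3, b = C c' * P1
        have hmemA : C c * (P1 * (P2 * P3)) ∈ IntZ := by
          have hx : (a : Polynomial ℚ) = C c * (P1 * (P2 * P3)) := by rw [ha1, ha]; ring
          exact hx ▸ a.2
        obtain ⟨m, hm⟩ := c_int c (P1 * (P2 * P3)) hmemA 0 2 (-969) (-99) (-14) 137 3 (by norm_num [P1, P2, P3]) (by norm_num [P1, P2, P3]) (by norm_num)
        have hm3 : (3 : ℚ) * c = (m : ℚ) := by push_cast at hm; linarith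
        obtain ⟨m', hm'⟩ := c_is_int c' P1 (hb ▸ b.2) 4 4 1 1 1 0 (by norm_num [P1]) (by norm_num [P1]) (by norm_num)
        exact absurd (contra_int ((3:ℚ) * c) c' m m' 3 hm3 hm' (by norm_num)
          (by push_cast; rw [show ((3:ℚ) * c) * c' = 3 * (c * c') by ring, hcc]; norm_num)) id
      · -- a full, b = C c' * 1
        have hmemA : C c * (P1 * (P1 * P2 * P3)) ∈ IntZ := by
          have hx : (a : Polynomial ℚ) = C c * (P1 * (P1 * P2 * P3)) := by rw [ha1, ha]; ring
          exact hx ▸ a.2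
        obtain ⟨m', hm'⟩ := c_is_int c' 1 (hb ▸ b.2) 0 0 1 1 1 0 (by norm_num) (by norm_num) (by norm_num)
        have hpm := const_unit c' c m' hm' (P1 * (P1 * P2 * P3)) hmemA 9 (by norm_num)
          (by rw [mul_comm, hcc]; norm_num) 2 4 11 235 (-64) 3
          (by norm_num [P1, P2, P3]) (by norm_num [P1, P2, P3]) (by norm_num)
        exact Or.inr (unit_of_pm b c' m' (by rw [hb, mul_one]) hm' hpm)
    · rw [hb1] at hval
      have h3 : (a : Polynomial ℚ) * b₁ = C (9⁻¹ : ℚ) * (P1 * P2 * P3) :=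
        mul_left_cancel₀ P1_ne (by linear_combination hval)
      obtain ⟨c, c', hcc, hcase⟩ := split3 (9⁻¹ : ℚ) (by norm_num) _ _ h3
      rcases hcase with ⟨ha, hb⟩|⟨ha, hb⟩|⟨ha, hb⟩|⟨ha, hb⟩|⟨ha, hb⟩|⟨ha, hb⟩|⟨ha, hb⟩|⟨ha, hb⟩
      · -- a = C c * 1, b = P1 * (C c' * (P1*P2*P3)) : full
        have hmemB : C c' * (P1 * (P1 * P2 * P3)) ∈ IntZ := by
          have hx : (b : Polynomial ℚ) = C c' * (P1 * (P1 * P2 * P3)) := by rw [hb1, hb]; ring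
          exact hx ▸ b.2
        obtain ⟨m, hm⟩ := c_is_int c 1 (ha ▸ a.2) 0 0 1 1 1 0 (by norm_num) (by norm_num) (by norm_num)
        have hpm := const_unit c c' m hm (P1 * (P1 * P2 * P3)) hmemB 9 (by norm_num)
          (by rw [hcc]; norm_num) 2 4 11 235 (-64) 3
          (by norm_num [P1, P2, P3]) (by norm_num [P1, P2, P3]) (by norm_num)
        exact Or.inl (unit_of_pm a c m (by rw [ha, mul_one]) hm hpm)
      · -- a = C c * P1, b = C c' * (P1*(P2*P3)) : fixdiv 3 on b
        have hmemB : C c' * (P1 * (P2 * P3)) ∈ IntZ := by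
          have hx : (b : Polynomial ℚ) = C c' * (P1 * (P2 * P3)) := by rw [hb1, hb]; ring
          exact hx ▸ b.2
        obtain ⟨m, hm⟩ := c_is_int c P1 (ha ▸ a.2) 4 4 1 1 1 0 (by norm_num [P1]) (by norm_num [P1]) (by norm_num)
        obtain ⟨m', hm'⟩ := c_int c' (P1 * (P2 * P3)) hmemB 0 2 (-969) (-99) (-14) 137 3 (by norm_num [P1, P2, P3]) (by norm_num [P1, P2, P3]) (by norm_num)
        have hm'3 : (3 : ℚ) * c' = (m' : ℚ) := by push_cast at hm'; linarith
        exact absurd (contra_int c ((3:ℚ) * c') m m' 3 hm hm'3 (by norm_num)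
          (by push_cast; rw [show c * ((3:ℚ) * c') = 3 * (c * c') by ring, hcc]; norm_num)) id
      · -- a = C c * P2, b = C c' * (P1*(P1*P3))
        have hmemB : C c' * (P1 * (P1 * P3)) ∈ IntZ := by
          have hx : (b : Polynomial ℚ) = C c' * (P1 * (P1 * P3)) := by rw [hb1, hb]; ring
          exact hx ▸ b.2
        obtain ⟨m, hm⟩ := c_is_int c P2 (ha ▸ a.2) 3 2 10 (-9) 1 1 (by norm_num [P2]) (by norm_num [P2]) (by norm_num)
        obtain ⟨m', hm'⟩ := c_is_int c' (P1 * (P1 * P3)) hmemB 4 2 45 (-11) 1 4 (by norm_num [P1, P3]) (by norm_num [P1, P3]) (by norm_num)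
        exact absurd (contra_int c c' m m' 9 hm hm' (by norm_num) (by rw [hcc]; norm_num)) id
      · -- a = C c * P3, b = C c' * (P1*(P1*P2))
        have hmemB : C c' * (P1 * (P1 * P2)) ∈ IntZ := by
          have hx : (b : Polynomial ℚ) = C c' * (P1 * (P1 * P2)) := by rw [hb1, hb]; ring
          exact hx ▸ b.2
        obtain ⟨m, hm⟩ := c_is_int c P3 (ha ▸ a.2) 3 2 8 (-11) (-4) (-3) (by norm_num [P3]) (by norm_num [P3]) (by norm_num)
        obtain ⟨m', hm'⟩ := c_is_int c' (P1 * (P1 * P2)) hmemB 4 2 47 (-9) (-4) (-21) (by norm_num [P1, P2]) (by norm_num [P1, P2]) (by norm_num)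
        exact absurd (contra_int c c' m m' 9 hm hm' (by norm_num) (by rw [hcc]; norm_num)) id
      · -- a = C c * (P1*P2), b = C c' * (P1*P3)
        have hmemB : C c' * (P1 * P3) ∈ IntZ := by
          have hx : (b : Polynomial ℚ) = C c' * (P1 * P3) := by rw [hb1, hb]; ring
          exact hx ▸ b.2
        obtain ⟨m, hm⟩ := c_is_int c (P1 * P2) (ha ▸ a.2) 4 2 47 9 (-4) 21 (by norm_num [P1, P2]) (by norm_num [P1, P2]) (by norm_num)
        obtain ⟨m', hm'⟩ := c_is_int c' (P1 * P3) hmemB 4 2 45 11 1 (-4) (by norm_num [P1, P3]) (by norm_num [P1, P3]) (by norm_num)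
        exact absurd (contra_int c c' m m' 9 hm hm' (by norm_num) (by rw [hcc]; norm_num)) id
      · -- a = C c * (P1*P3), b = C c' * (P1*P2)
        have hmemB : C c' * (P1 * P2) ∈ IntZ := by
          have hx : (b : Polynomial ℚ) = C c' * (P1 * P2) := by rw [hb1, hb]; ring
          exact hx ▸ b.2
        obtain ⟨m, hm⟩ := c_is_int c (P1 * P3) (ha ▸ a.2) 4 2 45 11 1 (-4) (by norm_num [P1, P3]) (by norm_num [P1, P3]) (by norm_num)
        obtain ⟨m', hm'⟩ := c_is_int c' (P1 * P2) hmemB 4 2 47 9 (-4) 21 (by norm_num [P1, P2]) (by norm_num [P1, P2]) (by norm_num)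
        exact absurd (contra_int c c' m m' 9 hm hm' (by norm_num) (by rw [hcc]; norm_num)) id
      · -- a = C c * (P2*P3), b = C c' * (P1*P1)
        have hmemB : C c' * (P1 * P1) ∈ IntZ := by
          have hx : (b : Polynomial ℚ) = C c' * (P1 * P1) := by rw [hb1, hb]; ring
          exact hx ▸ b.2
        obtain ⟨m, hm⟩ := c_is_int c (P2 * P3) (ha ▸ a.2) 2 3 99 80 (-21) 26 (by norm_num [P2, P3]) (by norm_num [P2, P3]) (by norm_num)
        obtain ⟨m', hm'⟩ := c_is_int c' (P1 * P1) hmemB 4 4 1 1 1 0 (by norm_num [P1]) (by norm_num [P1]) (by norm_num)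
        exact absurd (contra_int c c' m m' 9 hm hm' (by norm_num) (by rw [hcc]; norm_num)) id
      · -- a = C c * (P1*P2*P3) : fixdiv 3, b = C c' * (P1*1)
        have hmemB : C c' * (P1 * 1) ∈ IntZ := by
          have hx : (b : Polynomial ℚ) = C c' * (P1 * 1) := by rw [hb1, hb]; ring
          exact hx ▸ b.2
        obtain ⟨m, hm⟩ := c_int c (P1 * P2 * P3) (ha ▸ a.2) 0 2 (-969) (-99) (-14) 137 3 (by norm_num [P1, P2, P3]) (by norm_num [P1, P2, P3]) (by norm_num)
        have hm3 : (3 : ℚ) * c = (m : ℚ) := by push_cast at hm; linarith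
        obtain ⟨m', hm'⟩ := c_is_int c' (P1 * 1) hmemB 4 4 1 1 1 0 (by norm_num [P1]) (by norm_num [P1]) (by norm_num)
        exact absurd (contra_int ((3:ℚ) * c) c' m m' 3 hm3 hm' (by norm_num)
          (by push_cast; rw [show ((3:ℚ) * c) * c' = 3 * (c * c') by ring, hcc]; norm_num)) id

lemma prod_eq : (⟨f12, hf_mem⟩ : IntZ) ^ 2 = ⟨g12, hg_mem⟩ * ⟨u12, hu_mem⟩ * ⟨v12, hv_mem⟩ := by
  apply Subtype.ext
  show f12 ^ 2 = g12 * u12 * v12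
  rw [f12_eq, g12_eq, u12_eq, v12_eq]
  have hC : C (3⁻¹ : ℚ) * C (3⁻¹ : ℚ) = C (9⁻¹ : ℚ) := by rw [← C_mul]; norm_num
  linear_combination ((P1 * P2 * P3) * (P1 * P2 * P3)) * hC

/-- `f = (x−3)(x³−17)(x³−19)/3` is irreducible in `Int(ℤ)`; the
polynomials `g = (x−3)²(x³−17)(x³−19)/9`, `x³−17` and `x³−19` are irreducible in
`Int(ℤ)`; `f² = g·(x³−17)·(x³−19)`; and this factorization of `f²`, of length 3, is
essentially different from `f·f`. Hence `f` is a non-absolutely irreducible element of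
`Int(ℤ)` a power of which admits factorizations of different lengths. -/
theorem stmt12 :
    ∃ (hf : f12 ∈ IntZ) (hg : g12 ∈ IntZ) (hu : u12 ∈ IntZ) (hv : v12 ∈ IntZ),
      Irreducible (⟨f12, hf⟩ : IntZ) ∧
      Irreducible (⟨g12, hg⟩ : IntZ) ∧
      Irreducible (⟨u12, hu⟩ : IntZ) ∧
      Irreducible (⟨v12, hv⟩ : IntZ) ∧
      (⟨f12, hf⟩ : IntZ) ^ 2 = ⟨g12, hg⟩ * ⟨u12, hu⟩ * ⟨v12, hv⟩ ∧
      ({⟨g12, hg⟩, ⟨u12, hu⟩, ⟨v12, hv⟩} : Multiset IntZ).card = 3 ∧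
      ¬ EssentiallySame ({⟨g12, hg⟩, ⟨u12, hu⟩, ⟨v12, hv⟩} : Multiset IntZ)
          (Multiset.replicate 2 (⟨f12, hf⟩ : IntZ)) ∧
      ¬ AbsolutelyIrreducible (⟨f12, hf⟩ : IntZ) :=
  by
  refine ⟨hf_mem, hg_mem, hu_mem, hv_mem, irr_f, irr_g, irr_u, irr_v, prod_eq, rfl, ?_, ?_⟩
  · intro h
    have hc := Multiset.card_eq_card_of_rel h
    simp [Multiset.card_replicate] at hc
  · rintro ⟨-, habs⟩
    have hrel := habs 2 one_lt_two
      ({⟨g12, hg_mem⟩, ⟨u12, hu_mem⟩, ⟨v12, hv_mem⟩} : Multiset IntZ)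
      (by
        intro x hx
        rcases (by simpa using hx : x = ⟨g12, hg_mem⟩ ∨ x = ⟨u12, hu_mem⟩ ∨ x = ⟨v12, hv_mem⟩) with rfl|rfl|rfl
        exacts [irr_g, irr_u, irr_v])
      (by
        rw [prod_eq]
        simp [Multiset.prod_cons, mul_assoc])
    have hc := Multiset.card_eq_card_of_rel hrel
    simp [Multiset.card_replicate] at hc


end
end
end

section
/- The polynomial f = (x^2 + 4)(x^4 + 7)/4 lies in Int(Z) and is irreducible in Int(Z); the polynomials (x^2 + 4)^3(x^4 + 7)^2/64 and x^4 + 7 lie in Int(Z) and are irreducible in Int(Z); f^3 = ((x^2 + 4)^3(x^4 + 7)^2/64) · (x^4 + 7); and this factorization of f^3, of length 2 < 3, is essentially different from f · f · f. Hence f is a non-absolutely irreducible element of Int(Z) such that some power f^k (k > 2) has a factorization of length strictly less than k. -/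
open Polynomial

noncomputable section

/-- `f = (x² + 4)(x⁴ + 7)/4`. -/
def f15 : Polynomial ℚ :=
  Polynomial.C ((4 : ℚ))⁻¹ *
    toQ ((X ^ 2 + Polynomial.C 4) * (X ^ 4 + Polynomial.C 7))

/-- `(x² + 4)³(x⁴ + 7)²/64`. -/
def g15a : Polynomial ℚ :=
  Polynomial.C ((64 : ℚ))⁻¹ *
    toQ ((X ^ 2 + Polynomial.C 4) ^ 3 * (X ^ 4 + Polynomial.C 7) ^ 2)

/-- `x⁴ + 7`. -/
def g15b : Polynomial ℚ := toQ (X ^ 4 + Polynomial.C 7)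


/-! ### Auxiliary material -/

/-- `P15 = X² + 4` in `ℚ[X]`. -/
def P15 : Polynomial ℚ := X ^ 2 + Polynomial.C 4

/-- `Q15 = X⁴ + 7` in `ℚ[X]`. -/
def Q15 : Polynomial ℚ := X ^ 4 + Polynomial.C 7

lemma P15_ne_zero : P15 ≠ 0 := (monic_X_pow_add_C (4 : ℚ) (by norm_num)).ne_zero

lemma Q15_ne_zero : Q15 ≠ 0 := (monic_X_pow_add_C (7 : ℚ) (by norm_num)).ne_zero

lemma f15_eq : f15 = Polynomial.C ((4 : ℚ))⁻¹ * (P15 * Q15) := by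
  simp [f15, toQ, P15, Q15, Polynomial.map_mul, Polynomial.map_add, Polynomial.map_pow,
    map_ofNat]

lemma g15a_eq : g15a = Polynomial.C ((64 : ℚ))⁻¹ * (P15 ^ 3 * Q15 ^ 2) := by
  simp [g15a, toQ, P15, Q15, Polynomial.map_mul, Polynomial.map_add, Polynomial.map_pow,
    map_ofNat]

lemma g15b_eq : g15b = Polynomial.C (1 : ℚ) * (P15 ^ 0 * Q15 ^ 1) := by
  simp [g15b, toQ, P15, Q15, Polynomial.map_add, Polynomial.map_pow, map_ofNat]

lemma eval_CPQ (u : ℚ) (i j : ℕ) (x : ℚ) :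
    (Polynomial.C u * P15 ^ i * Q15 ^ j).eval x = u * (x ^ 2 + 4) ^ i * (x ^ 4 + 7) ^ j := by
  simp [P15, Q15]

lemma P15_irr : Irreducible P15 := by
  rw [Polynomial.irreducible_iff_roots_eq_zero_of_degree_le_three]
  · rw [Multiset.eq_zero_iff_forall_notMem]
    intro x hx
    rw [mem_roots P15_ne_zero] at hx
    have hx2 : P15.eval x = 0 := hx
    simp only [P15, eval_add, eval_pow, eval_X, eval_C] at hx2
    nlinarith [sq_nonneg x]
  · simp [P15, natDegree_X_pow_add_C]
  · simp [P15, natDegree_X_pow_add_C]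

lemma Q15_irr : Irreducible Q15 := by
  have hz : Irreducible (X ^ 4 + Polynomial.C 7 : Polynomial ℤ) := by
    have hmon : (X ^ 4 + Polynomial.C 7 : Polynomial ℤ).Monic :=
      monic_X_pow_add_C (7 : ℤ) (by norm_num)
    apply Polynomial.IsEisensteinAt.irreducible (𝓟 := Ideal.span {(7 : ℤ)})
    · constructor
      · rw [hmon.leadingCoeff, Ideal.mem_span_singleton]
        norm_num
      · intro n hn
        rw [natDegree_X_pow_add_C] at hn
        rw [Ideal.mem_span_singleton]
        interval_cases n <;> simp [coeff_X_pow]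
      · rw [Ideal.span_singleton_pow, Ideal.mem_span_singleton]
        norm_num
    · exact (Ideal.span_singleton_prime (by norm_num)).mpr (by norm_num)
    · exact hmon.isPrimitive
    · rw [natDegree_X_pow_add_C]; norm_num
  have hprim : (X ^ 4 + Polynomial.C 7 : Polynomial ℤ).IsPrimitive :=
    (monic_X_pow_add_C (7 : ℤ) (by norm_num)).isPrimitive
  have := (Polynomial.IsPrimitive.Int.irreducible_iff_irreducible_map_cast hprim).mp hz
  have heq : (X ^ 4 + Polynomial.C 7 : Polynomial ℤ).map (Int.castRingHom ℚ) = Q15 := by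
    simp [Q15, Polynomial.map_add, Polynomial.map_pow, map_ofNat]
  rwa [heq] at this

lemma not_assoc_PQ : ¬ Associated P15 Q15 := by
  rintro ⟨w, hw⟩
  have h2 := congrArg Polynomial.natDegree hw
  rw [Polynomial.natDegree_mul P15_ne_zero (Units.ne_zero w),
    Polynomial.natDegree_eq_zero_of_isUnit w.isUnit] at h2
  rw [P15, Q15, natDegree_X_pow_add_C, natDegree_X_pow_add_C] at h2
  norm_num at h2

lemma not_P_dvd_Q : ¬ P15 ∣ Q15 := fun h => not_assoc_PQ (P15_irr.associated_of_dvd Q15_irr h)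

lemma not_Q_dvd_P : ¬ Q15 ∣ P15 :=
  fun h => not_assoc_PQ ((Q15_irr.associated_of_dvd P15_irr h).symm)

/-- Structure of divisors of `P15 ^ a * Q15 ^ b` in `ℚ[X]`. -/
lemma dvd_PQ : ∀ N a b : ℕ, ∀ g : Polynomial ℚ, a + b ≤ N → g ∣ P15 ^ a * Q15 ^ b →
    ∃ (u : ℚ) (i j : ℕ), i ≤ a ∧ j ≤ b ∧ g = Polynomial.C u * P15 ^ i * Q15 ^ j := by
  intro N
  induction N with
  | zero =>
    intro a b g hab hdvd
    obtain ⟨rfl, rfl⟩ : a = 0 ∧ b = 0 := by omega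
    simp only [pow_zero, mul_one] at hdvd
    obtain ⟨u, -, hu⟩ := Polynomial.isUnit_iff.mp (isUnit_of_dvd_one hdvd)
    exact ⟨u, 0, 0, le_refl _, le_refl _, by simp [hu]⟩
  | succ N ih =>
    intro a b g hab hdvd
    by_cases hpg : P15 ∣ g
    · have hPdvd : P15 ∣ P15 ^ a * Q15 ^ b := hpg.trans hdvd
      have ha : a ≠ 0 := by
        rintro rfl
        rw [pow_zero, one_mul] at hPdvd
        exact not_P_dvd_Q (P15_irr.prime.dvd_of_dvd_pow hPdvd)
      obtain ⟨a', rfl⟩ : ∃ a', a = a' + 1 := ⟨a - 1, by omega⟩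
      obtain ⟨g₁, rfl⟩ := hpg
      have hdvd' : g₁ ∣ P15 ^ a' * Q15 ^ b := by
        rw [show P15 ^ (a' + 1) * Q15 ^ b = P15 * (P15 ^ a' * Q15 ^ b) by ring] at hdvd
        exact (mul_dvd_mul_iff_left P15_ne_zero).mp hdvd
      obtain ⟨u, i, j, hia, hjb, hg⟩ := ih a' b g₁ (by omega) hdvd'
      exact ⟨u, i + 1, j, by omega, hjb, by rw [hg]; ring⟩
    · by_cases hqg : Q15 ∣ g
      · have hQdvd : Q15 ∣ P15 ^ a * Q15 ^ b := hqg.trans hdvd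
        have hb : b ≠ 0 := by
          rintro rfl
          rw [pow_zero, mul_one] at hQdvd
          exact not_Q_dvd_P (Q15_irr.prime.dvd_of_dvd_pow hQdvd)
        obtain ⟨b', rfl⟩ : ∃ b', b = b' + 1 := ⟨b - 1, by omega⟩
        obtain ⟨g₁, rfl⟩ := hqg
        have hdvd' : g₁ ∣ P15 ^ a * Q15 ^ b' := by
          rw [show P15 ^ a * Q15 ^ (b' + 1) = Q15 * (P15 ^ a * Q15 ^ b') by ring] at hdvd
          exact (mul_dvd_mul_iff_left Q15_ne_zero).mp hdvd
        obtain ⟨u, i, j, hia, hjb, hg⟩ := ih a b' g₁ (by omega) hdvd'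
        exact ⟨u, i, j + 1, hia, by omega, by rw [hg]; ring⟩
      · have hcp : IsCoprime P15 g := P15_irr.coprime_iff_not_dvd.mpr hpg
        have hcq : IsCoprime Q15 g := Q15_irr.coprime_iff_not_dvd.mpr hqg
        have : IsCoprime (P15 ^ a * Q15 ^ b) g := (hcp.pow_left).mul_left (hcq.pow_left)
        obtain ⟨u, -, hu⟩ := Polynomial.isUnit_iff.mp (this.isUnit_of_dvd' hdvd dvd_rfl)
        exact ⟨u, 0, 0, by omega, by omega, by simp [hu]⟩

/-- Decomposition of a factorization of `C c * (P15 ^ a * Q15 ^ b)`. -/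
lemma decomp {g h : Polynomial ℚ} {c : ℚ} (hc : c ≠ 0) (a b : ℕ)
    (hmul : Polynomial.C c * (P15 ^ a * Q15 ^ b) = g * h) :
    ∃ (u : ℚ) (i j : ℕ), i ≤ a ∧ j ≤ b ∧ u ≠ 0 ∧
      g = Polynomial.C u * P15 ^ i * Q15 ^ j ∧
      h = Polynomial.C (c / u) * P15 ^ (a - i) * Q15 ^ (b - j) := by
  have hCc : (Polynomial.C c : Polynomial ℚ) ≠ 0 := by
    simpa using hc
  have hdvd : g ∣ P15 ^ a * Q15 ^ b := by
    refine ⟨Polynomial.C c⁻¹ * h, ?_⟩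
    calc P15 ^ a * Q15 ^ b
        = Polynomial.C c⁻¹ * (Polynomial.C c * (P15 ^ a * Q15 ^ b)) := by
          rw [← mul_assoc, ← Polynomial.C_mul, inv_mul_cancel₀ hc, Polynomial.C_1, one_mul]
      _ = Polynomial.C c⁻¹ * (g * h) := by rw [hmul]
      _ = g * (Polynomial.C c⁻¹ * h) := by ring
  obtain ⟨u, i, j, hia, hjb, hg⟩ := dvd_PQ (a + b) a b g (le_refl _) hdvd
  have hu0 : u ≠ 0 := by
    rintro rfl
    rw [hg] at hmul
    simp only [Polynomial.C_0, zero_mul] at hmul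
    exact (mul_ne_zero hCc (mul_ne_zero (pow_ne_zero _ P15_ne_zero)
      (pow_ne_zero _ Q15_ne_zero))) hmul
  refine ⟨u, i, j, hia, hjb, hu0, hg, ?_⟩
  have hgne : Polynomial.C u * P15 ^ i * Q15 ^ j ≠ 0 :=
    mul_ne_zero (mul_ne_zero (by simpa using hu0) (pow_ne_zero _ P15_ne_zero))
      (pow_ne_zero _ Q15_ne_zero)
  apply mul_left_cancel₀ hgne
  rw [← hg, ← hmul]
  have e1 : Polynomial.C u * Polynomial.C (c / u) = Polynomial.C c := by
    rw [← Polynomial.C_mul, mul_div_cancel₀ _ hu0]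
  calc Polynomial.C c * (P15 ^ a * Q15 ^ b)
      = (Polynomial.C u * Polynomial.C (c / u)) * (P15 ^ i * P15 ^ (a - i)) *
        (Q15 ^ j * Q15 ^ (b - j)) := by
        rw [e1, ← pow_add, ← pow_add, Nat.add_sub_cancel' hia, Nat.add_sub_cancel' hjb]
        ring
    _ = Polynomial.C u * P15 ^ i * Q15 ^ j *
        (Polynomial.C (c / u) * P15 ^ (a - i) * Q15 ^ (b - j)) := by ring
    _ = g * (Polynomial.C (c / u) * P15 ^ (a - i) * Q15 ^ (b - j)) := by rw [hg]

lemma arith_contra (u v c d₁ d₂ : ℚ) (T S N : ℤ) (ht : u * d₁ = (T : ℚ))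
    (hs : v * d₂ = (S : ℚ)) (huv : u * v = c) (hN : 2 ≤ N)
    (hkey : (N : ℚ) * (d₁ * d₂ * c) = 1) : False := by
  have h1 : ((N * (T * S) : ℤ) : ℚ) = 1 := by
    push_cast
    rw [← ht, ← hs]
    linear_combination ((N : ℚ) * d₁ * d₂) * huv + hkey
  have h2 : N * (T * S) = 1 := by exact_mod_cast h1
  have h3 : N ∣ 1 := ⟨T * S, h2.symm⟩
  have := Int.le_of_dvd one_pos h3
  omega

lemma arith_unit (u v c d₁ d₂ : ℚ) (T S : ℤ) (ht : u * d₁ = (T : ℚ))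
    (hs : v * d₂ = (S : ℚ)) (huv : u * v = c) (hkey : d₁ * d₂ * c = 1) :
    T = 1 ∧ S = 1 ∨ T = -1 ∧ S = -1 := by
  have h1 : ((T * S : ℤ) : ℚ) = 1 := by
    push_cast
    rw [← ht, ← hs]
    linear_combination (d₁ * d₂) * huv + hkey
  exact Int.eq_one_or_neg_one_of_mul_eq_one' (by exact_mod_cast h1)

lemma unit_case (x : IntZ) (u : ℚ) (hgeq : (x : Polynomial ℚ) = Polynomial.C u)
    (hu : u = 1 ∨ u = -1) : IsUnit x := by
  refine IsUnit.of_mul_eq_one (a := x) x (Subtype.ext ?_)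
  show (x : Polynomial ℚ) * (x : Polynomial ℚ) = 1
  rcases hu with rfl | rfl <;> rw [hgeq] <;> rw [← Polynomial.C_mul] <;> norm_num

lemma not_unit_of_eval0 {r : Polynomial ℚ} (hr : r ∈ IntZ) {k : ℤ} (hk : 2 ≤ k)
    (h0 : r.eval 0 = (k : ℚ)) : ¬ IsUnit (⟨r, hr⟩ : IntZ) := by
  intro hu
  obtain ⟨z, hz⟩ := isUnit_iff_exists_inv.mp hu
  have hval : r * (z : Polynomial ℚ) = 1 := congrArg Subtype.val hz
  obtain ⟨m, hm⟩ := z.2 (0 : ℤ)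
  rw [Int.cast_zero] at hm
  have h1 : r.eval 0 * (z : Polynomial ℚ).eval 0 = 1 := by
    rw [← Polynomial.eval_mul, hval, Polynomial.eval_one]
  rw [h0, hm] at h1
  have h2 : k * m = 1 := by exact_mod_cast h1
  have h3 : k ∣ 1 := ⟨m, h2.symm⟩
  have := Int.le_of_dvd one_pos h3
  omega

/-- Extract the two key evaluation equations for a factor. -/
lemma eval_eqs (x : IntZ) (u : ℚ) (i j : ℕ)
    (hgeq : (x : Polynomial ℚ) = Polynomial.C u * P15 ^ i * Q15 ^ j) :
    (∃ m : ℤ, u * 4 ^ i * 7 ^ j = (m : ℚ)) ∧ (∃ m : ℤ, u * 5 ^ i * 8 ^ j = (m : ℚ)) := by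
  constructor
  · obtain ⟨m, hm⟩ := x.2 (0 : ℤ)
    refine ⟨m, ?_⟩
    rw [hgeq, Int.cast_zero, eval_CPQ] at hm
    norm_num at hm
    convert hm using 2 <;> norm_num
  · obtain ⟨m, hm⟩ := x.2 (1 : ℤ)
    refine ⟨m, ?_⟩
    rw [hgeq, Int.cast_one, eval_CPQ] at hm
    norm_num at hm
    convert hm using 2 <;> norm_num


lemma f15_eval (x : ℚ) : f15.eval x = (x ^ 2 + 4) * (x ^ 4 + 7) / 4 := by
  rw [f15_eq]
  simp [P15, Q15]
  ring

lemma g15a_eval (x : ℚ) : g15a.eval x = (x ^ 2 + 4) ^ 3 * (x ^ 4 + 7) ^ 2 / 64 := by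
  rw [g15a_eq]
  simp [P15, Q15]
  ring

lemma g15b_eval (x : ℚ) : g15b.eval x = x ^ 4 + 7 := by
  rw [g15b_eq]
  simp [P15, Q15]

lemma mem_f15 : f15 ∈ IntZ := by
  intro n
  rcases Int.even_or_odd n with ⟨k, hk⟩ | ⟨k, hk⟩
  · refine ⟨(k ^ 2 + 1) * (n ^ 4 + 7), ?_⟩
    rw [f15_eval]
    subst hk
    push_cast
    ring
  · refine ⟨(n ^ 2 + 4) * (2 * (2 * k ^ 4 + 4 * k ^ 3 + 3 * k ^ 2 + k + 1)), ?_⟩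
    rw [f15_eval]
    subst hk
    push_cast
    ring

lemma mem_g15a : g15a ∈ IntZ := by
  intro n
  rcases Int.even_or_odd n with ⟨k, hk⟩ | ⟨k, hk⟩
  · refine ⟨(k ^ 2 + 1) ^ 3 * (n ^ 4 + 7) ^ 2, ?_⟩
    rw [g15a_eval]
    subst hk
    push_cast
    ring
  · refine ⟨(n ^ 2 + 4) ^ 3 * (2 * k ^ 4 + 4 * k ^ 3 + 3 * k ^ 2 + k + 1) ^ 2, ?_⟩
    rw [g15a_eval]
    subst hk
    push_cast
    ring

lemma mem_g15b : g15b ∈ IntZ := by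
  intro n
  refine ⟨n ^ 4 + 7, ?_⟩
  rw [g15b_eval]
  push_cast
  ring
lemma f15_irred : Irreducible (⟨f15, mem_f15⟩ : IntZ) := by
  constructor
  · exact not_unit_of_eval0 mem_f15 (k := 7) (by norm_num) (by
      rw [f15_eq]
      norm_num [P15, Q15])
  rintro x y hxy
  have hmul : Polynomial.C ((1 : ℚ)/4) * (P15 ^ 1 * Q15 ^ 1) =
      (x : Polynomial ℚ) * (y : Polynomial ℚ) := by
    have h1 : f15 = (x : Polynomial ℚ) * (y : Polynomial ℚ) := congrArg Subtype.val hxy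
    rw [← h1, f15_eq]
    norm_num
  obtain ⟨u, i, j, hia, hjb, hu0, hgeq, hheq⟩ := decomp (by norm_num) 1 1 hmul
  set v : ℚ := (1 : ℚ)/4 / u with hv
  have huv : u * v = (1 : ℚ)/4 := by
    rw [hv]; field_simp; try ring
  obtain ⟨⟨m₁, hm₁⟩, ⟨m₂, hm₂⟩⟩ := eval_eqs x u i j hgeq
  obtain ⟨⟨n₁, hn₁⟩, ⟨n₂, hn₂⟩⟩ := eval_eqs y v (1 - i) (1 - j) hheq
  interval_cases i <;> interval_cases j <;> norm_num at hm₁ hm₂ hn₁ hn₂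
  · -- case i = 0, j = 0
    have ht : u * 1 = ((0 * m₁ + 1 * m₂ : ℤ) : ℚ) := by
      push_cast
      linear_combination (0 : ℚ) * hm₁ + (1 : ℚ) * hm₂
    have hs : v * 4 = ((3 * n₁ + -2 * n₂ : ℤ) : ℚ) := by
      push_cast
      linear_combination (3 : ℚ) * hn₁ + (-2 : ℚ) * hn₂
    have hTS := arith_unit u v (1/4) 1 4 _ _ ht hs huv (by norm_num)
    left
    refine unit_case x u (by simpa using hgeq) ?_
    rcases hTS with ⟨h1, -⟩ | ⟨h1, -⟩
    · left; have := ht; rw [h1] at this; push_cast at this; linarith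
    · right; have := ht; rw [h1] at this; push_cast at this; linarith
  · -- case i = 0, j = 1
    have ht : u * 1 = ((-1 * m₁ + 1 * m₂ : ℤ) : ℚ) := by
      push_cast
      linear_combination (-1 : ℚ) * hm₁ + (1 : ℚ) * hm₂
    have hs : v * 1 = ((-1 * n₁ + 1 * n₂ : ℤ) : ℚ) := by
      push_cast
      linear_combination (-1 : ℚ) * hn₁ + (1 : ℚ) * hn₂
    exact (arith_contra u v (1/4) 1 1 _ _ 4 ht hs huv (by norm_num) (by norm_num)).elim
  · -- case i = 1, j = 0
    have ht : u * 1 = ((-1 * m₁ + 1 * m₂ : ℤ) : ℚ) := by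
      push_cast
      linear_combination (-1 : ℚ) * hm₁ + (1 : ℚ) * hm₂
    have hs : v * 1 = ((-1 * n₁ + 1 * n₂ : ℤ) : ℚ) := by
      push_cast
      linear_combination (-1 : ℚ) * hn₁ + (1 : ℚ) * hn₂
    exact (arith_contra u v (1/4) 1 1 _ _ 4 ht hs huv (by norm_num) (by norm_num)).elim
  · -- case i = 1, j = 1
    have ht : u * 4 = ((3 * m₁ + -2 * m₂ : ℤ) : ℚ) := by
      push_cast
      linear_combination (3 : ℚ) * hm₁ + (-2 : ℚ) * hm₂
    have hs : v * 1 = ((0 * n₁ + 1 * n₂ : ℤ) : ℚ) := by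
      push_cast
      linear_combination (0 : ℚ) * hn₁ + (1 : ℚ) * hn₂
    have hTS := arith_unit u v (1/4) 4 1 _ _ ht hs huv (by norm_num)
    right
    refine unit_case y v (by simpa using hheq) ?_
    rcases hTS with ⟨-, h1⟩ | ⟨-, h1⟩
    · left; have := hs; rw [h1] at this; push_cast at this; linarith
    · right; have := hs; rw [h1] at this; push_cast at this; linarith

lemma g15a_irred : Irreducible (⟨g15a, mem_g15a⟩ : IntZ) := by
  constructor
  · exact not_unit_of_eval0 mem_g15a (k := 49) (by norm_num) (by
      rw [g15a_eq]
      norm_num [P15, Q15])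
  rintro x y hxy
  have hmul : Polynomial.C ((1 : ℚ)/64) * (P15 ^ 3 * Q15 ^ 2) =
      (x : Polynomial ℚ) * (y : Polynomial ℚ) := by
    have h1 : g15a = (x : Polynomial ℚ) * (y : Polynomial ℚ) := congrArg Subtype.val hxy
    rw [← h1, g15a_eq]
    norm_num
  obtain ⟨u, i, j, hia, hjb, hu0, hgeq, hheq⟩ := decomp (by norm_num) 3 2 hmul
  set v : ℚ := (1 : ℚ)/64 / u with hv
  have huv : u * v = (1 : ℚ)/64 := by
    rw [hv]; field_simp; try ring
  obtain ⟨⟨m₁, hm₁⟩, ⟨m₂, hm₂⟩⟩ := eval_eqs x u i j hgeq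
  obtain ⟨⟨n₁, hn₁⟩, ⟨n₂, hn₂⟩⟩ := eval_eqs y v (3 - i) (2 - j) hheq
  interval_cases i <;> interval_cases j <;> norm_num at hm₁ hm₂ hn₁ hn₂
  · -- case i = 0, j = 0
    have ht : u * 1 = ((0 * m₁ + 1 * m₂ : ℤ) : ℚ) := by
      push_cast
      linear_combination (0 : ℚ) * hm₁ + (1 : ℚ) * hm₂
    have hs : v * 64 = ((-51 * n₁ + 20 * n₂ : ℤ) : ℚ) := by
      push_cast
      linear_combination (-51 : ℚ) * hn₁ + (20 : ℚ) * hn₂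
    have hTS := arith_unit u v (1/64) 1 64 _ _ ht hs huv (by norm_num)
    left
    refine unit_case x u (by simpa using hgeq) ?_
    rcases hTS with ⟨h1, -⟩ | ⟨h1, -⟩
    · left; have := ht; rw [h1] at this; push_cast at this; linarith
    · right; have := ht; rw [h1] at this; push_cast at this; linarith
  · -- case i = 0, j = 1
    have ht : u * 1 = ((-1 * m₁ + 1 * m₂ : ℤ) : ℚ) := by
      push_cast
      linear_combination (-1 : ℚ) * hm₁ + (1 : ℚ) * hm₂
    have hs : v * 8 = ((-29 * n₁ + 13 * n₂ : ℤ) : ℚ) := by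
      push_cast
      linear_combination (-29 : ℚ) * hn₁ + (13 : ℚ) * hn₂
    exact (arith_contra u v (1/64) 1 8 _ _ 8 ht hs huv (by norm_num) (by norm_num)).elim
  · -- case i = 0, j = 2
    have ht : u * 1 = ((17 * m₁ + -13 * m₂ : ℤ) : ℚ) := by
      push_cast
      linear_combination (17 : ℚ) * hm₁ + (-13 : ℚ) * hm₂
    have hs : v * 1 = ((-41 * n₁ + 21 * n₂ : ℤ) : ℚ) := by
      push_cast
      linear_combination (-41 : ℚ) * hn₁ + (21 : ℚ) * hn₂
    exact (arith_contra u v (1/64) 1 1 _ _ 64 ht hs huv (by norm_num) (by norm_num)).elim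
  · -- case i = 1, j = 0
    have ht : u * 1 = ((-1 * m₁ + 1 * m₂ : ℤ) : ℚ) := by
      push_cast
      linear_combination (-1 : ℚ) * hm₁ + (1 : ℚ) * hm₂
    have hs : v * 16 = ((49 * n₁ + -24 * n₂ : ℤ) : ℚ) := by
      push_cast
      linear_combination (49 : ℚ) * hn₁ + (-24 : ℚ) * hn₂
    exact (arith_contra u v (1/64) 1 16 _ _ 4 ht hs huv (by norm_num) (by norm_num)).elim
  · -- case i = 1, j = 1
    have ht : u * 4 = ((3 * m₁ + -2 * m₂ : ℤ) : ℚ) := by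
      push_cast
      linear_combination (3 : ℚ) * hm₁ + (-2 : ℚ) * hm₂
    have hs : v * 8 = ((9 * n₁ + -5 * n₂ : ℤ) : ℚ) := by
      push_cast
      linear_combination (9 : ℚ) * hn₁ + (-5 : ℚ) * hn₂
    exact (arith_contra u v (1/64) 4 8 _ _ 2 ht hs huv (by norm_num) (by norm_num)).elim
  · -- case i = 1, j = 2
    have ht : u * 4 = ((-31 * m₁ + 19 * m₂ : ℤ) : ℚ) := by
      push_cast
      linear_combination (-31 : ℚ) * hm₁ + (19 : ℚ) * hm₂
    have hs : v * 1 = ((11 * n₁ + -7 * n₂ : ℤ) : ℚ) := by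
      push_cast
      linear_combination (11 : ℚ) * hn₁ + (-7 : ℚ) * hn₂
    exact (arith_contra u v (1/64) 4 1 _ _ 16 ht hs huv (by norm_num) (by norm_num)).elim
  · -- case i = 2, j = 0
    have ht : u * 1 = ((11 * m₁ + -7 * m₂ : ℤ) : ℚ) := by
      push_cast
      linear_combination (11 : ℚ) * hm₁ + (-7 : ℚ) * hm₂
    have hs : v * 4 = ((-31 * n₁ + 19 * n₂ : ℤ) : ℚ) := by
      push_cast
      linear_combination (-31 : ℚ) * hn₁ + (19 : ℚ) * hn₂
    exact (arith_contra u v (1/64) 1 4 _ _ 16 ht hs huv (by norm_num) (by norm_num)).elim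
  · -- case i = 2, j = 1
    have ht : u * 8 = ((9 * m₁ + -5 * m₂ : ℤ) : ℚ) := by
      push_cast
      linear_combination (9 : ℚ) * hm₁ + (-5 : ℚ) * hm₂
    have hs : v * 4 = ((3 * n₁ + -2 * n₂ : ℤ) : ℚ) := by
      push_cast
      linear_combination (3 : ℚ) * hn₁ + (-2 : ℚ) * hn₂
    exact (arith_contra u v (1/64) 8 4 _ _ 2 ht hs huv (by norm_num) (by norm_num)).elim
  · -- case i = 2, j = 2
    have ht : u * 16 = ((49 * m₁ + -24 * m₂ : ℤ) : ℚ) := by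
      push_cast
      linear_combination (49 : ℚ) * hm₁ + (-24 : ℚ) * hm₂
    have hs : v * 1 = ((-1 * n₁ + 1 * n₂ : ℤ) : ℚ) := by
      push_cast
      linear_combination (-1 : ℚ) * hn₁ + (1 : ℚ) * hn₂
    exact (arith_contra u v (1/64) 16 1 _ _ 4 ht hs huv (by norm_num) (by norm_num)).elim
  · -- case i = 3, j = 0
    have ht : u * 1 = ((-41 * m₁ + 21 * m₂ : ℤ) : ℚ) := by
      push_cast
      linear_combination (-41 : ℚ) * hm₁ + (21 : ℚ) * hm₂
    have hs : v * 1 = ((17 * n₁ + -13 * n₂ : ℤ) : ℚ) := by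
      push_cast
      linear_combination (17 : ℚ) * hn₁ + (-13 : ℚ) * hn₂
    exact (arith_contra u v (1/64) 1 1 _ _ 64 ht hs huv (by norm_num) (by norm_num)).elim
  · -- case i = 3, j = 1
    have ht : u * 8 = ((-29 * m₁ + 13 * m₂ : ℤ) : ℚ) := by
      push_cast
      linear_combination (-29 : ℚ) * hm₁ + (13 : ℚ) * hm₂
    have hs : v * 1 = ((-1 * n₁ + 1 * n₂ : ℤ) : ℚ) := by
      push_cast
      linear_combination (-1 : ℚ) * hn₁ + (1 : ℚ) * hn₂
    exact (arith_contra u v (1/64) 8 1 _ _ 8 ht hs huv (by norm_num) (by norm_num)).elim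
  · -- case i = 3, j = 2
    have ht : u * 64 = ((-51 * m₁ + 20 * m₂ : ℤ) : ℚ) := by
      push_cast
      linear_combination (-51 : ℚ) * hm₁ + (20 : ℚ) * hm₂
    have hs : v * 1 = ((0 * n₁ + 1 * n₂ : ℤ) : ℚ) := by
      push_cast
      linear_combination (0 : ℚ) * hn₁ + (1 : ℚ) * hn₂
    have hTS := arith_unit u v (1/64) 64 1 _ _ ht hs huv (by norm_num)
    right
    refine unit_case y v (by simpa using hheq) ?_
    rcases hTS with ⟨-, h1⟩ | ⟨-, h1⟩
    · left; have := hs; rw [h1] at this; push_cast at this; linarith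
    · right; have := hs; rw [h1] at this; push_cast at this; linarith

lemma g15b_irred : Irreducible (⟨g15b, mem_g15b⟩ : IntZ) := by
  constructor
  · exact not_unit_of_eval0 mem_g15b (k := 7) (by norm_num) (by
      rw [g15b_eq]
      norm_num [P15, Q15])
  rintro x y hxy
  have hmul : Polynomial.C ((1 : ℚ)/1) * (P15 ^ 0 * Q15 ^ 1) =
      (x : Polynomial ℚ) * (y : Polynomial ℚ) := by
    have h1 : g15b = (x : Polynomial ℚ) * (y : Polynomial ℚ) := congrArg Subtype.val hxy
    rw [← h1, g15b_eq]
    norm_num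
  obtain ⟨u, i, j, hia, hjb, hu0, hgeq, hheq⟩ := decomp (by norm_num) 0 1 hmul
  set v : ℚ := (1 : ℚ)/1 / u with hv
  have huv : u * v = (1 : ℚ)/1 := by
    rw [hv]; field_simp; try ring
  obtain ⟨⟨m₁, hm₁⟩, ⟨m₂, hm₂⟩⟩ := eval_eqs x u i j hgeq
  obtain ⟨⟨n₁, hn₁⟩, ⟨n₂, hn₂⟩⟩ := eval_eqs y v (0 - i) (1 - j) hheq
  interval_cases i <;> interval_cases j <;> norm_num at hm₁ hm₂ hn₁ hn₂
  · -- case i = 0, j = 0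
    have ht : u * 1 = ((0 * m₁ + 1 * m₂ : ℤ) : ℚ) := by
      push_cast
      linear_combination (0 : ℚ) * hm₁ + (1 : ℚ) * hm₂
    have hs : v * 1 = ((-1 * n₁ + 1 * n₂ : ℤ) : ℚ) := by
      push_cast
      linear_combination (-1 : ℚ) * hn₁ + (1 : ℚ) * hn₂
    have hTS := arith_unit u v (1/1) 1 1 _ _ ht hs huv (by norm_num)
    left
    refine unit_case x u (by simpa using hgeq) ?_
    rcases hTS with ⟨h1, -⟩ | ⟨h1, -⟩
    · left; have := ht; rw [h1] at this; push_cast at this; linarith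
    · right; have := ht; rw [h1] at this; push_cast at this; linarith
  · -- case i = 0, j = 1
    have ht : u * 1 = ((-1 * m₁ + 1 * m₂ : ℤ) : ℚ) := by
      push_cast
      linear_combination (-1 : ℚ) * hm₁ + (1 : ℚ) * hm₂
    have hs : v * 1 = ((0 * n₁ + 1 * n₂ : ℤ) : ℚ) := by
      push_cast
      linear_combination (0 : ℚ) * hn₁ + (1 : ℚ) * hn₂
    have hTS := arith_unit u v (1/1) 1 1 _ _ ht hs huv (by norm_num)
    right
    refine unit_case y v (by simpa using hheq) ?_
    rcases hTS with ⟨-, h1⟩ | ⟨-, h1⟩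
    · left; have := hs; rw [h1] at this; push_cast at this; linarith
    · right; have := hs; rw [h1] at this; push_cast at this; linarith

lemma pow_eq : f15 ^ 3 = g15a * g15b := by
  rw [f15_eq, g15a_eq, g15b_eq]
  have h64 : (Polynomial.C ((4 : ℚ))⁻¹) ^ 3 = Polynomial.C ((64 : ℚ))⁻¹ := by
    rw [← map_pow]
    norm_num
  rw [Polynomial.C_1, ← h64]
  ring

/-- `f = (x²+4)(x⁴+7)/4` is irreducible in `Int(ℤ)`; the polynomials
`(x²+4)³(x⁴+7)²/64` and `x⁴+7` are irreducible in `Int(ℤ)`;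
`f³ = ((x²+4)³(x⁴+7)²/64)·(x⁴+7)`; and this factorization of `f³`, of length `2 < 3`, is
essentially different from `f·f·f`. Hence `f` is a non-absolutely irreducible element of
`Int(ℤ)` such that `f³` has a factorization of length strictly less than `3`. -/
theorem stmt15 :
    ∃ (hf : f15 ∈ IntZ) (ha : g15a ∈ IntZ) (hb : g15b ∈ IntZ),
      Irreducible (⟨f15, hf⟩ : IntZ) ∧
      Irreducible (⟨g15a, ha⟩ : IntZ) ∧
      Irreducible (⟨g15b, hb⟩ : IntZ) ∧
      (⟨f15, hf⟩ : IntZ) ^ 3 = ⟨g15a, ha⟩ * ⟨g15b, hb⟩ ∧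
      ({⟨g15a, ha⟩, ⟨g15b, hb⟩} : Multiset IntZ).card = 2 ∧ (2 : ℕ) < 3 ∧
      ¬ EssentiallySame ({⟨g15a, ha⟩, ⟨g15b, hb⟩} : Multiset IntZ)
          (Multiset.replicate 3 (⟨f15, hf⟩ : IntZ)) ∧
      ¬ AbsolutelyIrreducible (⟨f15, hf⟩ : IntZ) := by
  refine ⟨mem_f15, mem_g15a, mem_g15b, f15_irred, g15a_irred, g15b_irred, ?_, ?_, ?_, ?_, ?_⟩
  · exact Subtype.ext pow_eq
  · rfl
  · norm_num
  · intro h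
    have hcard := Multiset.card_eq_card_of_rel h
    rw [Multiset.card_replicate] at hcard
    simp at hcard
  · rintro ⟨-, habs⟩
    have h := habs 3 (by norm_num)
      ({⟨g15a, mem_g15a⟩, ⟨g15b, mem_g15b⟩} : Multiset IntZ)
      (by
        intro a ha
        simp only [Multiset.insert_eq_cons, Multiset.mem_cons, Multiset.mem_singleton] at ha
        rcases ha with rfl | rfl
        · exact g15a_irred
        · exact g15b_irred)
      (by
        simp only [Multiset.insert_eq_cons, Multiset.prod_cons, Multiset.prod_singleton]
        exact (Subtype.ext pow_eq).symm)
    have hcard := Multiset.card_eq_card_of_rel h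
    rw [Multiset.card_replicate] at hcard
    simp at hcard

end
end

section
/- One has fixdiv((x−1)(x−3)(x^2+4)) = (4) = fixdiv((x−1)^2(x^2+4)) = fixdiv((x−3)^2(x^2+4)) as ideals of Z; consequently, for the irreducible polynomial f = (x−1)(x−3)(x^2+4)/4 of Int(Z), the subsets J_1 = {1} and J_2 = {2} of the index set of the factors g_1 = x−1, g_2 = x−3, g_3 = x^2+4 are element-disjoint and interchangeable, and f is not absolutely irreducible in Int(Z). -/
open Polynomial

noncomputable section

/-- The factors `g₁ = x−1`, `g₂ = x−3`, `g₃ = x²+4` of the numerator. -/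
def g16 : Fin 3 → Polynomial ℤ :=
  ![X - Polynomial.C 1, X - Polynomial.C 3, X ^ 2 + Polynomial.C 4]

/-- `f = (x−1)(x−3)(x²+4)/4`. -/
def f16 : Polynomial ℚ :=
  Polynomial.C ((4 : ℚ))⁻¹ * toQ (∏ i, g16 i)

/-- The index set `J₁ = {1}` (indexing the factor `x−1`). -/
def J16₁ : Finset (Fin 3) := {0}

/-- The index set `J₂ = {2}` (indexing the factor `x−3`). -/
def J16₂ : Finset (Fin 3) := {1}


namespace S16

def IV (g : Polynomial ℚ) : Prop := ∀ n : ℤ, ∃ m : ℤ, g.eval (n : ℚ) = (m : ℚ)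

def Pr (r₁ r₂ : ℚ) : Polynomial ℚ :=
  C ((4:ℚ)⁻¹) * ((X - C r₁) * (X - C r₂) * (X ^ 2 + C 4))

lemma Pr_eval (r₁ r₂ t : ℚ) : (Pr r₁ r₂).eval t = (4:ℚ)⁻¹ * ((t - r₁) * (t - r₂) * (t^2 + 4)) := by
  simp [Pr]

lemma sq4 (s : ℚ) : s^2 + 4 ≠ 0 := by positivity

lemma Pr_comm (r₁ r₂ : ℚ) : Pr r₁ r₂ = Pr r₂ r₁ := by unfold Pr; ring

lemma pm1 {m k : ℤ} (h : k * m = -1) : m = 1 ∨ m = -1 :=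
  Int.isUnit_iff.mp (IsUnit.of_mul_eq_one (a := m) (-k) (by linear_combination -h))

lemma pm1' {m k : ℤ} (h : k * m = 1) : m = 1 ∨ m = -1 :=
  Int.isUnit_iff.mp (IsUnit.of_mul_eq_one (a := m) k (by linear_combination h))

lemma L1' {r₁ r₂ : ℚ} (h₁ : r₁ = 1 ∨ r₁ = 3) (h₂ : r₂ = 1 ∨ r₂ = 3)
    {g h : Polynomial ℚ} (hg : IV g) (hh : IV h) (hmul : g * h = Pr r₁ r₂)
    (hdeg : g.natDegree = 1) (hroot : g.eval r₁ = 0) : False := by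
  have hg0 : g ≠ 0 := fun hz => by simp [hz] at hdeg
  set a := g.coeff 1 with ha
  have haz : a ≠ 0 := by
    have := Polynomial.leadingCoeff_ne_zero.mpr hg0
    rwa [Polynomial.leadingCoeff, hdeg] at this
  have hgform : g = C a * (X - C r₁) := by
    have hb : g = C a * X + C (g.coeff 0) := by
      have := Polynomial.eq_X_add_C_of_natDegree_le_one (le_of_eq hdeg)
      linear_combination this
    have hb0 : g.coeff 0 = -(a * r₁) := by
      have h' := hroot
      rw [hb] at h'
      simp at h'
      linarith
    rw [hb, hb0, map_neg, map_mul]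
    ring
  have hca : C a * C a⁻¹ = (1 : ℚ[X]) := by
    rw [← C_mul, mul_inv_cancel₀ haz, C_1]
  have hform : h = C ((4:ℚ)⁻¹) * C a⁻¹ * ((X - C r₂) * (X ^ 2 + C 4)) := by
    apply mul_left_cancel₀ hg0
    rw [hmul, hgform]
    calc Pr r₁ r₂ = C ((4:ℚ)⁻¹) * ((X - C r₁) * ((X - C r₂) * (X ^ 2 + C 4))) * (C a * C a⁻¹) := by
          rw [hca, mul_one]; unfold Pr; ring
      _ = C a * (X - C r₁) * (C ((4:ℚ)⁻¹) * C a⁻¹ * ((X - C r₂) * (X ^ 2 + C 4))) := by ring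
  rcases h₁ with rfl | rfl <;> rcases h₂ with rfl | rfl
  · obtain ⟨m, hm⟩ := hg 2
    rw [hgform] at hm; norm_num at hm
    obtain ⟨k, hk⟩ := hh 0
    rw [hform] at hk; norm_num at hk
    obtain ⟨j, hj⟩ := hh 3
    rw [hform] at hj; norm_num at hj
    have hmz : (m:ℚ) ≠ 0 := by rw [← hm]; exact haz
    rw [hm] at hk hj
    field_simp at hk hj
    have e1 : (-4 : ℤ) = k * (4 * m) := by qify; linear_combination 4 * hk
    have e2 : (26 : ℤ) = j * (4 * m) := by qify; linear_combination hj
    have e1' : k * m = -1 :=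
      mul_left_cancel₀ (by norm_num : (4:ℤ) ≠ 0) (by linear_combination -e1)
    rcases pm1 e1' with rfl | rfl <;> omega
  · obtain ⟨m, hm⟩ := hg 2
    rw [hgform] at hm; norm_num at hm
    obtain ⟨k, hk⟩ := hh 0
    rw [hform] at hk; norm_num at hk
    obtain ⟨l, hl⟩ := hh 2
    rw [hform] at hl; norm_num at hl
    obtain ⟨j, hj⟩ := hh 1
    rw [hform] at hj; norm_num at hj
    have hmz : (m:ℚ) ≠ 0 := by rw [← hm]; exact haz
    rw [hm] at hk hl hj
    field_simp at hk hl hj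
    have e1 : (-12 : ℤ) = k * (4 * m) := by qify; linear_combination hk
    have e2 : (-8 : ℤ) = l * (4 * m) := by qify; linear_combination hl
    have e3 : (-10 : ℤ) = j * (4 * m) := by qify; linear_combination hj
    have e1' : (l - k) * m = 1 :=
      mul_left_cancel₀ (by norm_num : (4:ℤ) ≠ 0) (by linear_combination e1 - e2)
    rcases pm1' e1' with rfl | rfl <;> omega
  · obtain ⟨m, hm⟩ := hg 4
    rw [hgform] at hm; norm_num at hm
    obtain ⟨k, hk⟩ := hh 0
    rw [hform] at hk; norm_num at hk
    obtain ⟨j, hj⟩ := hh 3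
    rw [hform] at hj; norm_num at hj
    have hmz : (m:ℚ) ≠ 0 := by rw [← hm]; exact haz
    rw [hm] at hk hj
    field_simp at hk hj
    have e1 : (-4 : ℤ) = k * (4 * m) := by qify; linear_combination 4 * hk
    have e2 : (26 : ℤ) = j * (4 * m) := by qify; linear_combination hj
    have e1' : k * m = -1 :=
      mul_left_cancel₀ (by norm_num : (4:ℤ) ≠ 0) (by linear_combination -e1)
    rcases pm1 e1' with rfl | rfl <;> omega
  · obtain ⟨m, hm⟩ := hg 4
    rw [hgform] at hm; norm_num at hm
    obtain ⟨k, hk⟩ := hh 0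
    rw [hform] at hk; norm_num at hk
    obtain ⟨l, hl⟩ := hh 2
    rw [hform] at hl; norm_num at hl
    obtain ⟨j, hj⟩ := hh 1
    rw [hform] at hj; norm_num at hj
    have hmz : (m:ℚ) ≠ 0 := by rw [← hm]; exact haz
    rw [hm] at hk hl hj
    field_simp at hk hl hj
    have e1 : (-12 : ℤ) = k * (4 * m) := by qify; linear_combination hk
    have e2 : (-8 : ℤ) = l * (4 * m) := by qify; linear_combination hl
    have e3 : (-10 : ℤ) = j * (4 * m) := by qify; linear_combination hj
    have e1' : (l - k) * m = 1 :=
      mul_left_cancel₀ (by norm_num : (4:ℤ) ≠ 0) (by linear_combination e1 - e2)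
    rcases pm1' e1' with rfl | rfl <;> omega

lemma L2' {r₁ r₂ : ℚ} (h₁ : r₁ = 1 ∨ r₁ = 3) (h₂ : r₂ = 1 ∨ r₂ = 3)
    {g h : Polynomial ℚ} (hg : IV g) (hh : IV h) (hmul : g * h = Pr r₁ r₂)
    (hdeg : g.natDegree = 2) (hroot : g.eval r₁ = 0) : False := by
  have hg0 : g ≠ 0 := fun hz => by simp [hz] at hdeg
  set q := g /ₘ (X - C r₁) with hqdef
  have hq : (X - C r₁) * q = g := Polynomial.mul_divByMonic_eq_iff_isRoot.mpr hroot
  have hq0 : q ≠ 0 := fun hz => by rw [hz, mul_zero] at hq; exact hg0 hq.symm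
  have hqdeg : q.natDegree = 1 := by
    have := Polynomial.natDegree_mul (X_sub_C_ne_zero r₁) hq0
    rw [hq, hdeg, natDegree_X_sub_C] at this
    omega
  set a := q.coeff 1 with ha
  have haz : a ≠ 0 := by
    have := Polynomial.leadingCoeff_ne_zero.mpr hq0
    rwa [Polynomial.leadingCoeff, hqdeg] at this
  have hqb : q = C a * X + C (q.coeff 0) := by
    have := Polynomial.eq_X_add_C_of_natDegree_le_one (le_of_eq hqdeg)
    linear_combination this
  -- cancel (X - C r₁) : q * h = C 4⁻¹ * ((X - C r₂) * (X^2 + C 4))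
  have hqh : q * h = C ((4:ℚ)⁻¹) * ((X - C r₂) * (X ^ 2 + C 4)) := by
    apply mul_left_cancel₀ (X_sub_C_ne_zero r₁)
    calc (X - C r₁) * (q * h) = g * h := by rw [← hq]; ring
      _ = Pr r₁ r₂ := hmul
      _ = (X - C r₁) * (C ((4:ℚ)⁻¹) * ((X - C r₂) * (X ^ 2 + C 4))) := by unfold Pr; ring
  -- the root of q must be r₂
  have hqb0 : q.coeff 0 = -(a * r₂) := by
    set s : ℚ := -(q.coeff 0) / a with hs
    have hqs : q.eval s = 0 := by rw [hqb]; simp only [eval_add, eval_mul, eval_C, eval_X]; rw [hs]; field_simp; ring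
    have hev := congrArg (Polynomial.eval s) hqh
    rw [eval_mul, hqs, zero_mul] at hev
    simp at hev
    have hsr : s = r₂ := by
      rcases hev with hev | hev
      · linarith
      · exact absurd hev (sq4 s)
    rw [← hsr, hs, mul_div_assoc', mul_div_cancel_left₀ _ haz, neg_neg]
  have hqform : q = C a * (X - C r₂) := by
    rw [hqb, hqb0, map_neg, map_mul]; ring
  have hca : C a * C a⁻¹ = (1 : ℚ[X]) := by
    rw [← C_mul, mul_inv_cancel₀ haz, C_1]
  have hform : h = C ((4:ℚ)⁻¹) * C a⁻¹ * (X ^ 2 + C 4) := by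
    apply mul_left_cancel₀ hq0
    rw [hqh, hqform]
    calc C ((4:ℚ)⁻¹) * ((X - C r₂) * (X ^ 2 + C 4))
        = C ((4:ℚ)⁻¹) * ((X - C r₂) * (X ^ 2 + C 4)) * (C a * C a⁻¹) := by rw [hca, mul_one]
      _ = C a * (X - C r₂) * (C ((4:ℚ)⁻¹) * C a⁻¹ * (X ^ 2 + C 4)) := by ring
  have hgform : g = (X - C r₁) * (C a * (X - C r₂)) := by rw [← hq, hqform]
  -- endgame
  rcases h₁ with rfl | rfl <;> rcases h₂ with rfl | rfl <;>
  · obtain ⟨m, hm⟩ := hg 2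
    rw [hgform] at hm; norm_num at hm
    obtain ⟨k, hk⟩ := hh 0
    rw [hform] at hk; norm_num at hk
    obtain ⟨j, hj⟩ := hh 1
    rw [hform] at hj; norm_num at hj
    have hk' : a⁻¹ = (k:ℚ) := by linarith
    have hak : a * (k:ℚ) = 1 := by rw [← hk']; field_simp
    have ej : (5:ℤ) * k = 4 * j := by
      exact_mod_cast (show (5:ℚ) * k = 4 * j by rw [← hk']; linarith)
    have hmk : (m:ℚ) * k = 1 ∨ (m:ℚ) * k = -1 := by
      first
        | (left; rw [← hm]; exact hak)
        | (right; rw [← hm]; linarith)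
    have hmk' : m * k = 1 ∨ m * k = -1 := by exact_mod_cast hmk
    have hk1 : k = 1 ∨ k = -1 := by
      rcases hmk' with h' | h'
      · exact pm1' h'
      · exact pm1 h'
    rcases hk1 with rfl | rfl <;> omega
lemma Pr_ne_zero {r₁ r₂ : ℚ} (h₁ : r₁ = 1 ∨ r₁ = 3) (h₂ : r₂ = 1 ∨ r₂ = 3) : Pr r₁ r₂ ≠ 0 := by
  intro h
  have h0 := congrArg (Polynomial.eval 0) h
  simp [Pr] at h0
  rcases h₁ with rfl | rfl <;> rcases h₂ with rfl | rfl <;> norm_num at h0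

lemma Pr_natDegree {r₁ r₂ : ℚ} : (Pr r₁ r₂).natDegree = 4 := by
  have h4 : ((X:ℚ[X]) ^ 2 + C 4).natDegree = 2 := natDegree_X_pow_add_C
  have h4z : ((X:ℚ[X]) ^ 2 + C 4) ≠ 0 := by
    intro hz
    have := congrArg (Polynomial.eval 0) hz
    simp at this
  rw [Pr, natDegree_C_mul (by norm_num : ((4:ℚ)⁻¹) ≠ 0),
    natDegree_mul (mul_ne_zero (X_sub_C_ne_zero r₁) (X_sub_C_ne_zero r₂)) h4z,
    natDegree_mul (X_sub_C_ne_zero r₁) (X_sub_C_ne_zero r₂),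
    natDegree_X_sub_C, natDegree_X_sub_C, h4]

lemma root_mem {r₁ r₂ s : ℚ} (hev : (Pr r₁ r₂).eval s = 0) : s = r₁ ∨ s = r₂ := by
  rw [show (Pr r₁ r₂).eval s = (4:ℚ)⁻¹ * ((s - r₁) * (s - r₂) * (s^2 + 4)) by simp [Pr]] at hev
  have := sq4 s
  rcases mul_eq_zero.mp hev with h | h
  · norm_num at h
  rcases mul_eq_zero.mp h with h' | h'
  · rcases mul_eq_zero.mp h' with h'' | h''
    · left; linarith
    · right; linarith
  · exact absurd h' this

lemma L1 {r₁ r₂ : ℚ} (h₁ : r₁ = 1 ∨ r₁ = 3) (h₂ : r₂ = 1 ∨ r₂ = 3)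
    {g h : Polynomial ℚ} (hg : IV g) (hh : IV h) (hmul : g * h = Pr r₁ r₂)
    (hdeg : g.natDegree = 1) : False := by
  have hg0 : g ≠ 0 := fun hz => by simp [hz] at hdeg
  have haz : g.coeff 1 ≠ 0 := by
    have := Polynomial.leadingCoeff_ne_zero.mpr hg0
    rwa [Polynomial.leadingCoeff, hdeg] at this
  set s : ℚ := -(g.coeff 0) / (g.coeff 1) with hs
  have hgs : g.eval s = 0 := by
    have hb := Polynomial.eq_X_add_C_of_natDegree_le_one (le_of_eq hdeg)
    rw [hb]
    simp only [eval_add, eval_mul, eval_C, eval_X]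
    rw [hs]; field_simp; ring
  have hPs : (Pr r₁ r₂).eval s = 0 := by
    rw [← hmul, eval_mul, hgs, zero_mul]
  rcases root_mem hPs with hr | hr
  · exact L1' h₁ h₂ hg hh hmul hdeg (hr ▸ hgs)
  · exact L1' h₂ h₁ hg hh (hmul.trans (Pr_comm r₁ r₂)) hdeg (hr ▸ hgs)

lemma L2 {r₁ r₂ : ℚ} (h₁ : r₁ = 1 ∨ r₁ = 3) (h₂ : r₂ = 1 ∨ r₂ = 3)
    {g h : Polynomial ℚ} (hg : IV g) (hh : IV h) (hmul : g * h = Pr r₁ r₂)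
    (hdg : g.natDegree = 2) (hdh : h.natDegree = 2) : False := by
  have hPr : (Pr r₁ r₂).eval r₁ = 0 := by simp [Pr]
  have hgh : g.eval r₁ * h.eval r₁ = 0 := by rw [← eval_mul, hmul]; exact hPr
  rcases mul_eq_zero.mp hgh with hr | hr
  · exact L2' h₁ h₂ hg hh hmul hdg hr
  · exact L2' h₁ h₂ hh hg (by rw [mul_comm]; exact hmul) hdh hr

lemma L0 {r₁ r₂ : ℚ} (h₁ : r₁ = 1 ∨ r₁ = 3) (h₂ : r₂ = 1 ∨ r₂ = 3)
    {g h : Polynomial ℚ} (hg : IV g) (hh : IV h) (hmul : g * h = Pr r₁ r₂)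
    (hdeg : g.natDegree = 0) : g = C 1 ∨ g = C (-1) := by
  have hgc : g = C (g.coeff 0) := Polynomial.eq_C_of_natDegree_eq_zero hdeg
  obtain ⟨m, hm⟩ := hg 0
  rw [hgc] at hm; norm_num at hm
  obtain ⟨k, hk⟩ := hh 0
  obtain ⟨l, hl⟩ := hh 2
  have e0 := congrArg (Polynomial.eval ((0:ℤ):ℚ)) hmul
  have e2 := congrArg (Polynomial.eval ((2:ℤ):ℚ)) hmul
  rw [eval_mul, hk] at e0
  rw [eval_mul, hl] at e2
  rw [hgc] at e0 e2
  norm_num [Pr] at e0 e2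
  rw [hm] at e0 e2
  have hm1 : m = 1 ∨ m = -1 := by
    rcases h₁ with rfl | rfl <;> rcases h₂ with rfl | rfl <;> norm_num at e0 e2
    · have E0 : m * k = 1 := by exact_mod_cast e0
      exact pm1' (show k * m = 1 by linear_combination E0)
    · have E0 : m * k = 3 := by exact_mod_cast e0
      have E2 : m * l = -2 := by exact_mod_cast e2
      exact pm1' (show (k + l) * m = 1 by linear_combination E0 + E2)
    · have E0 : m * k = 3 := by exact_mod_cast e0
      have E2 : m * l = -2 := by exact_mod_cast e2
      exact pm1' (show (k + l) * m = 1 by linear_combination E0 + E2)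
    · have E0 : m * k = 9 := by exact_mod_cast e0
      have E2 : m * l = 2 := by exact_mod_cast e2
      exact pm1' (show (k - 4 * l) * m = 1 by linear_combination E0 - 4 * E2)
  rcases hm1 with rfl | rfl
  · left; rw [hgc, hm]; norm_num
  · right; rw [hgc, hm]; norm_num


lemma keyIrred {r₁ r₂ : ℚ} (h₁ : r₁ = 1 ∨ r₁ = 3) (h₂ : r₂ = 1 ∨ r₂ = 3)
    {g h : Polynomial ℚ} (hg : IV g) (hh : IV h) (hmul : g * h = Pr r₁ r₂) :
    g = C 1 ∨ g = C (-1) ∨ h = C 1 ∨ h = C (-1) := by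
  have hP0 : Pr r₁ r₂ ≠ 0 := Pr_ne_zero h₁ h₂
  have hg0 : g ≠ 0 := fun hz => hP0 (by rw [← hmul, hz, zero_mul])
  have hh0 : h ≠ 0 := fun hz => hP0 (by rw [← hmul, hz, mul_zero])
  have hsum : g.natDegree + h.natDegree = 4 := by
    rw [← natDegree_mul hg0 hh0, hmul, Pr_natDegree]
  have hcases : g.natDegree = 0 ∨ g.natDegree = 1 ∨ g.natDegree = 2 ∨
      g.natDegree = 3 ∨ g.natDegree = 4 := by omega
  rcases hcases with hd | hd | hd | hd | hd
  · rcases L0 h₁ h₂ hg hh hmul hd with h' | h'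
    · exact Or.inl h'
    · exact Or.inr (Or.inl h')
  · exact absurd (L1 h₁ h₂ hg hh hmul hd) not_false
  · exact absurd (L2 h₁ h₂ hg hh hmul hd (by omega)) not_false
  · exact absurd (L1 h₁ h₂ hh hg (by rw [mul_comm]; exact hmul) (by omega)) not_false
  · rcases L0 h₁ h₂ hh hg (by rw [mul_comm]; exact hmul) (by omega) with h' | h'
    · exact Or.inr (Or.inr (Or.inl h'))
    · exact Or.inr (Or.inr (Or.inr h'))
lemma dvd13 (n : ℤ) : (4:ℤ) ∣ (n-1)*(n-3)*(n^2+4) := by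
  rcases Int.even_or_odd n with ⟨c, hc⟩ | ⟨c, hc⟩
  · exact ⟨(n-1)*(n-3)*(c^2+1), by subst hc; ring⟩
  · exact ⟨c*(c-1)*(n^2+4), by subst hc; ring⟩

lemma dvd11 (n : ℤ) : (4:ℤ) ∣ (n-1)*(n-1)*(n^2+4) := by
  rcases Int.even_or_odd n with ⟨c, hc⟩ | ⟨c, hc⟩
  · exact ⟨(n-1)*(n-1)*(c^2+1), by subst hc; ring⟩
  · exact ⟨c*c*(n^2+4), by subst hc; ring⟩

lemma dvd33 (n : ℤ) : (4:ℤ) ∣ (n-3)*(n-3)*(n^2+4) := by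
  rcases Int.even_or_odd n with ⟨c, hc⟩ | ⟨c, hc⟩
  · exact ⟨(n-3)*(n-3)*(c^2+1), by subst hc; ring⟩
  · exact ⟨(c-1)*(c-1)*(n^2+4), by subst hc; ring⟩

lemma memPr (r₁ r₂ : ℚ) (hdvd : ∀ n : ℤ, ∃ m : ℤ, ((n:ℚ) - r₁)*((n:ℚ) - r₂)*((n:ℚ)^2+4) = 4*m) :
    ∀ n : ℤ, ∃ m : ℤ, (Pr r₁ r₂).eval (n:ℚ) = (m:ℚ) := fun n => by
  obtain ⟨m, hm⟩ := hdvd n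
  exact ⟨m, by rw [Pr_eval, hm]; ring⟩

lemma mem13 : ∀ n : ℤ, ∃ m : ℤ, (Pr 1 3).eval (n:ℚ) = (m:ℚ) :=
  memPr 1 3 (fun n => by
    obtain ⟨m, hm⟩ := dvd13 n
    exact ⟨m, by exact_mod_cast congrArg (fun z : ℤ => (z:ℚ)) hm⟩)

lemma mem11 : ∀ n : ℤ, ∃ m : ℤ, (Pr 1 1).eval (n:ℚ) = (m:ℚ) :=
  memPr 1 1 (fun n => by
    obtain ⟨m, hm⟩ := dvd11 n
    exact ⟨m, by exact_mod_cast congrArg (fun z : ℤ => (z:ℚ)) hm⟩)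

lemma mem33 : ∀ n : ℤ, ∃ m : ℤ, (Pr 3 3).eval (n:ℚ) = (m:ℚ) :=
  memPr 3 3 (fun n => by
    obtain ⟨m, hm⟩ := dvd33 n
    exact ⟨m, by exact_mod_cast congrArg (fun z : ℤ => (z:ℚ)) hm⟩)

-- fixdiv lemmas
lemma fixdiv13 : fixdiv ((X - Polynomial.C 1) * (X - Polynomial.C 3) * (X ^ 2 + Polynomial.C 4)) =
    Ideal.span {(4 : ℤ)} := by
  apply le_antisymm
  · rw [fixdiv, Ideal.span_le]
    rintro _ ⟨n, rfl⟩
    rw [SetLike.mem_coe, Ideal.mem_span_singleton]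
    simpa using dvd13 n
  · rw [Ideal.span_le, Set.singleton_subset_iff, SetLike.mem_coe]
    have h1 : (12:ℤ) ∈ fixdiv ((X - Polynomial.C 1) * (X - Polynomial.C 3) * (X ^ 2 + Polynomial.C 4)) :=
      Ideal.subset_span ⟨0, by norm_num⟩
    have h2 : (-8:ℤ) ∈ fixdiv ((X - Polynomial.C 1) * (X - Polynomial.C 3) * (X ^ 2 + Polynomial.C 4)) :=
      Ideal.subset_span ⟨2, by norm_num⟩
    have h3 := add_mem h1 h2
    norm_num at h3
    exact h3

lemma fixdiv11 : fixdiv ((X - Polynomial.C 1) ^ 2 * (X ^ 2 + Polynomial.C 4)) =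
    Ideal.span {(4 : ℤ)} := by
  apply le_antisymm
  · rw [fixdiv, Ideal.span_le]
    rintro _ ⟨n, rfl⟩
    rw [SetLike.mem_coe, Ideal.mem_span_singleton]
    have := dvd11 n
    simpa [pow_two] using (by simpa using this : (4:ℤ) ∣ (n-1)*(n-1)*(n^2+4))
  · rw [Ideal.span_le, Set.singleton_subset_iff, SetLike.mem_coe]
    exact Ideal.subset_span ⟨0, by norm_num⟩

lemma fixdiv33 : fixdiv ((X - Polynomial.C 3) ^ 2 * (X ^ 2 + Polynomial.C 4)) =
    Ideal.span {(4 : ℤ)} := by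
  apply le_antisymm
  · rw [fixdiv, Ideal.span_le]
    rintro _ ⟨n, rfl⟩
    rw [SetLike.mem_coe, Ideal.mem_span_singleton]
    have := dvd33 n
    simpa [pow_two] using (by simpa using this : (4:ℤ) ∣ (n-3)*(n-3)*(n^2+4))
  · rw [Ideal.span_le, Set.singleton_subset_iff, SetLike.mem_coe]
    have h1 : (36:ℤ) ∈ fixdiv ((X - Polynomial.C 3) ^ 2 * (X ^ 2 + Polynomial.C 4)) :=
      Ideal.subset_span ⟨0, by norm_num⟩
    have h2 : (8:ℤ) ∈ fixdiv ((X - Polynomial.C 3) ^ 2 * (X ^ 2 + Polynomial.C 4)) :=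
      Ideal.subset_span ⟨2, by norm_num⟩
    have h3 := add_mem h1 (Ideal.mul_mem_left _ (-4) h2)
    norm_num at h3
    exact h3

lemma unit_of_pm {gc : Polynomial ℚ} (hm : gc ∈ IntZ) (h : gc = C 1 ∨ gc = C (-1)) :
    IsUnit (⟨gc, hm⟩ : IntZ) := by
  rcases h with h | h
  · have h2 : (⟨gc, hm⟩ : IntZ) = 1 := Subtype.ext (h.trans C_1)
    rw [h2]; exact isUnit_one
  · have h2 : (⟨gc, hm⟩ : IntZ) = -1 := Subtype.ext (h.trans (by simp))
    rw [h2]; exact isUnit_one.neg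

lemma irredPr {r₁ r₂ : ℚ} (h₁ : r₁ = 1 ∨ r₁ = 3) (h₂ : r₂ = 1 ∨ r₂ = 3)
    {P : Polynomial ℚ} (hPeq : P = Pr r₁ r₂) (hmem : P ∈ IntZ) :
    Irreducible (⟨P, hmem⟩ : IntZ) := by
  constructor
  · rintro ⟨u, hu⟩
    have h2 : ((u : IntZ) : Polynomial ℚ) = P := congrArg Subtype.val hu
    have h1 : ((u : IntZ) : Polynomial ℚ) * (((u⁻¹ : IntZˣ) : IntZ) : Polynomial ℚ) = 1 :=
      congrArg Subtype.val u.mul_inv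
    have h3 := congrArg (Polynomial.eval r₁) h1
    rw [eval_mul, h2, hPeq, Pr_eval] at h3
    norm_num at h3
  · rintro ⟨ga, hga⟩ ⟨gb, hgb⟩ hab
    have h4 : P = ga * gb := congrArg Subtype.val hab
    have hmul : ga * gb = Pr r₁ r₂ := by rw [← hPeq]; exact h4.symm
    rcases keyIrred h₁ h₂ hga hgb hmul with h | h | h | h
    · exact Or.inl (unit_of_pm hga (Or.inl h))
    · exact Or.inl (unit_of_pm hga (Or.inr h))
    · exact Or.inr (unit_of_pm hgb (Or.inl h))
    · exact Or.inr (unit_of_pm hgb (Or.inr h))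
end S16

/-- `fixdiv((x−1)(x−3)(x²+4)) = (4) = fixdiv((x−1)²(x²+4)) = fixdiv((x−3)²(x²+4))`;
consequently, for the irreducible polynomial `f = (x−1)(x−3)(x²+4)/4` of `Int(ℤ)`, the
subsets `J₁ = {1}` and `J₂ = {2}` of the index set of the factors `g₁ = x−1`, `g₂ = x−3`,
`g₃ = x²+4` are element-disjoint and interchangeable, and `f` is not absolutely
irreducible in `Int(ℤ)`. -/
theorem stmt16 :
    fixdiv ((X - Polynomial.C 1) * (X - Polynomial.C 3) * (X ^ 2 + Polynomial.C 4)) =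
      Ideal.span {(4 : ℤ)} ∧
    fixdiv ((X - Polynomial.C 1) ^ 2 * (X ^ 2 + Polynomial.C 4)) = Ideal.span {(4 : ℤ)} ∧
    fixdiv ((X - Polynomial.C 3) ^ 2 * (X ^ 2 + Polynomial.C 4)) = Ideal.span {(4 : ℤ)} ∧
    ∃ hf : f16 ∈ IntZ,
      Irreducible (⟨f16, hf⟩ : IntZ) ∧
      -- `J₁` and `J₂` are element-disjoint:
      (∀ i ∈ J16₁, ∀ j ∈ J16₂, g16 i ≠ g16 j) ∧
      -- `J₁` and `J₂` are interchangeable: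
      Disjoint J16₁ J16₂ ∧
      fixdiv ((∏ i ∈ J16₁, g16 i) * ∏ i ∈ J16₂ᶜ, g16 i) = Ideal.span {(4 : ℤ)} ∧
      fixdiv ((∏ i ∈ J16₂, g16 i) * ∏ i ∈ J16₁ᶜ, g16 i) = Ideal.span {(4 : ℤ)} ∧
      ¬ AbsolutelyIrreducible (⟨f16, hf⟩ : IntZ) := by
  refine ⟨S16.fixdiv13, S16.fixdiv11, S16.fixdiv33, ?_⟩
  have hfeq : f16 = S16.Pr 1 3 := by
    unfold f16 toQ S16.Pr
    rw [Fin.prod_univ_three]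
    simp [g16, Polynomial.map_mul, Polynomial.map_sub, Polynomial.map_add, Polynomial.map_pow,
      map_ofNat]
  have hf : f16 ∈ IntZ := by rw [hfeq]; exact S16.mem13
  refine ⟨hf, ?_, ?_, ?_, ?_, ?_, ?_⟩
  · exact S16.irredPr (Or.inl rfl) (Or.inr rfl) hfeq hf
  · intro i hi j hj
    simp [J16₁] at hi
    simp [J16₂] at hj
    subst hi; subst hj
    intro hgg
    have h0 := congrArg (Polynomial.eval 0) hgg
    simp [g16] at h0
  · decide
  · have hc2 : (J16₂ᶜ : Finset (Fin 3)) = {0, 2} := by decide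
    rw [hc2, show (J16₁ : Finset (Fin 3)) = {0} from rfl,
      Finset.prod_singleton, Finset.prod_pair (by decide : (0 : Fin 3) ≠ 2)]
    rw [show g16 0 * (g16 0 * g16 2)
        = ((X - Polynomial.C 1) ^ 2 * (X ^ 2 + Polynomial.C 4) : Polynomial ℤ) from by
      simp [g16]; ring]
    exact S16.fixdiv11
  · have hc1 : (J16₁ᶜ : Finset (Fin 3)) = {1, 2} := by decide
    rw [hc1, show (J16₂ : Finset (Fin 3)) = {1} from rfl,
      Finset.prod_singleton, Finset.prod_pair (by decide : (1 : Fin 3) ≠ 2)]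
    rw [show g16 1 * (g16 1 * g16 2)
        = ((X - Polynomial.C 3) ^ 2 * (X ^ 2 + Polynomial.C 4) : Polynomial ℤ) from by
      simp [g16]; ring]
    exact S16.fixdiv33
  · intro habs
    obtain ⟨-, habs2⟩ := habs
    have mA : S16.Pr 1 1 ∈ IntZ := S16.mem11
    have mB : S16.Pr 3 3 ∈ IntZ := S16.mem33
    set A : IntZ := ⟨S16.Pr 1 1, mA⟩ with hA
    set B : IntZ := ⟨S16.Pr 3 3, mB⟩ with hB
    have hs : ∀ a ∈ ({A, B} : Multiset IntZ), Irreducible a := by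
      intro a ha
      rcases Multiset.mem_cons.mp ha with rfl | ha
      · exact S16.irredPr (Or.inl rfl) (Or.inl rfl) rfl mA
      · rw [Multiset.mem_singleton.mp ha]
        exact S16.irredPr (Or.inr rfl) (Or.inr rfl) rfl mB
    have hprod : ({A, B} : Multiset IntZ).prod = (⟨f16, hf⟩ : IntZ) ^ 2 := by
      rw [show ({A, B} : Multiset IntZ) = A ::ₘ {B} from rfl, Multiset.prod_cons,
        Multiset.prod_singleton]
      apply Subtype.ext
      rw [show ((A * B : IntZ) : Polynomial ℚ) = S16.Pr 1 1 * S16.Pr 3 3 from rfl,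
        show (((⟨f16, hf⟩ : IntZ) ^ 2 : IntZ) : Polynomial ℚ) = f16 ^ 2 from by push_cast; rfl]
      rw [hfeq]; unfold S16.Pr; ring
    have hrel := habs2 2 one_lt_two {A, B} hs hprod
    unfold EssentiallySame at hrel
    rcases Multiset.rel_cons_left.mp hrel with ⟨b, bs, hAb, -, heq⟩
    have hbmem : b ∈ Multiset.replicate 2 (⟨f16, hf⟩ : IntZ) := by
      rw [heq]; exact Multiset.mem_cons_self b bs
    have hb : b = ⟨f16, hf⟩ := Multiset.eq_of_mem_replicate hbmem
    subst hb
    obtain ⟨u, hu⟩ := hAb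
    have hval : S16.Pr 1 1 * ((u : IntZ) : Polynomial ℚ) = f16 := congrArg Subtype.val hu
    have h1 : ((u : IntZ) : Polynomial ℚ) * (((u⁻¹ : IntZˣ) : IntZ) : Polynomial ℚ) = 1 :=
      congrArg Subtype.val u.mul_inv
    have e3 := congrArg (Polynomial.eval 3) hval
    rw [eval_mul, hfeq] at e3
    have e3' : Polynomial.eval 3 ((u : IntZ) : Polynomial ℚ) = 0 := by
      rw [S16.Pr_eval, S16.Pr_eval] at e3
      norm_num at e3
      linarith
    have h5 := congrArg (Polynomial.eval 3) h1
    rw [eval_mul, e3', zero_mul] at h5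
    simp at h5


end
end
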